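/- arXiv:1706.05242 — 7 statements merged into one kernel-verified Lean document; each statement's English description precedes it below -/
import Mathlib

section
/- Let Σ=(X,U,F) be a system, Q ⊆ X a nonempty set, and (𝒜,G) an invariant cover of Σ and Q. Then the function τ ↦ log₂ r_inv(τ,Q) from ℕ to ℝ≥0 is subadditive, i.e. for all τ₁,τ₂ ∈ ℕ one has log₂ r_inv(τ₁+τ₂,Q) ≤ log₂ r_inv(τ₁,Q) + log₂ r_inv(τ₂,Q), and consequently lim_{τ→∞} (1/τ) log₂ r_inv(τ,Q) exists and equals inf_{τ∈ℕ} (1/τ) log₂ r_inv(τ,Q). -/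
open Set Filter Topology

/-- An invariant cover `(𝒜, G)` of the system with transition function `F` and the set `Q`:
`cov` is a finite cover of `Q` by subsets of `Q` and `G` assigns to each cover element an
input such that `F(A, G(A)) ⊆ Q`. -/
structure InvCover {X U : Type*} (F : X → U → Set X) (Q : Set X) where
  cov : Set (Set X)
  G : Set X → U
  finite : cov.Finite
  subset : ∀ A ∈ cov, A ⊆ Q
  covers : Q ⊆ ⋃₀ cov
  inv : ∀ A ∈ cov, ∀ x ∈ A, F x (G A) ⊆ Q

variable {X U : Type*}

/-- The set `P(α|_{[0;t]})` associated with `𝒮 ⊆ 𝒜^{[0;τ)}`: for `t+1 < τ` it is the set of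
possible successor cover elements of the initial piece `α|_{[0;t]}`, and for `t = τ-1`
(i.e. `¬ t + 1 < τ`) it is the set `P(α)` of initial cover elements. -/
def Pset {τ : ℕ} (𝒮 : Set (Fin τ → Set X)) (α : Fin τ → Set X) (t : ℕ) :
    Set (Set X) :=
  if ht : t + 1 < τ then
    {A | ∃ β ∈ 𝒮, (∀ t' : Fin τ, (t' : ℕ) ≤ t → β t' = α t') ∧ A = β ⟨t + 1, ht⟩}
  else
    {A | ∃ β ∈ 𝒮, ∃ h0 : 0 < τ, A = β ⟨0, h0⟩}

/-- `𝒮` is `(τ,Q)`-spanning in the invariant cover `c`. -/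
def IsSpanning (F : X → U → Set X) (Q : Set X) (c : InvCover F Q) (τ : ℕ)
    (𝒮 : Set (Fin τ → Set X)) : Prop :=
  (∀ α ∈ 𝒮, ∀ t, α t ∈ c.cov) ∧
  (∀ x ∈ Q, ∃ α ∈ 𝒮, ∃ h0 : 0 < τ, x ∈ α ⟨0, h0⟩) ∧
  (∀ α ∈ 𝒮, ∀ t : Fin τ, (t : ℕ) + 1 < τ →
    ∀ x ∈ α t, F x (c.G (α t)) ⊆ ⋃ A ∈ Pset 𝒮 α (t : ℕ), A)

/-- The expansion number `N(𝒮)`. -/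
noncomputable def expNum {τ : ℕ} (𝒮 : Set (Fin τ → Set X)) : ℕ :=
  sSup {n | ∃ α ∈ 𝒮, n = ∏ t ∈ Finset.range τ, (Pset 𝒮 α t).ncard}

/-- `r_inv(τ, Q)` : the smallest expansion number of a `(τ,Q)`-spanning set (`⊤` if no
spanning set exists). -/
noncomputable def rinv (F : X → U → Set X) (Q : Set X) (c : InvCover F Q)
    (τ : ℕ) : ℕ∞ :=
  sInf {n | ∃ 𝒮 : Set (Fin τ → Set X), IsSpanning F Q c τ 𝒮 ∧ n = (expNum 𝒮 : ℕ∞)}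

/-- Base-2 logarithm `ℕ∞ → EReal`, with `log₂ ∞ = ∞`. -/
noncomputable def elog2 (m : ℕ∞) : EReal :=
  WithTop.recTopCoe ⊤ (fun n : ℕ => ((Real.logb 2 n : ℝ) : EReal)) m

/-- The entropy `h(𝒜,G)` of an invariant cover, defined through the infimum
`inf_{τ ≥ 1} (1/τ) log₂ r_inv(τ,Q)` (which equals the limit). -/
noncomputable def coverEntropy (F : X → U → Set X) (Q : Set X)
    (c : InvCover F Q) : EReal :=
  ⨅ (τ : ℕ) (_ : 0 < τ), (((τ : ℝ)⁻¹ : ℝ) : EReal) * elog2 (rinv F Q c τ)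

/-- The invariance feedback entropy `h_inv` of the system and `Q`. -/
noncomputable def invEntropy (F : X → U → Set X) (Q : Set X) : EReal :=
  ⨅ c : InvCover F Q, coverEntropy F Q c

/-! Concatenating a `τ₁`-spanning set with a `τ₂`-spanning set gives a `(τ₁ + τ₂)`-spanning
set. Along a concatenation `α₁ α₂` the successor sets are those of `α₁` before the junction and
those of `α₂` after it; the two factors counting initial elements trade places (the junction
factor is the set of initial elements of the second spanning set, the final factor is contained
in that of the first). Hence `r_inv(τ₁ + τ₂) ≤ r_inv(τ₁) r_inv(τ₂)`, and Fekete's lemma applies to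
the nonnegative subadditive sequence `log₂ r_inv(τ)`. -/

namespace Fin

variable {α : Sort*} {m n : ℕ}

theorem append_of_lt (u : Fin m → α) (v : Fin n → α) {i : Fin (m + n)} (h : (i : ℕ) < m) :
    append u v i = u ⟨i, h⟩ :=
  append_left u v ⟨i, h⟩

theorem append_of_le (u : Fin m → α) (v : Fin n → α) {i : Fin (m + n)} (h : m ≤ i) :
    append u v i = v ⟨i - m, by omega⟩ := by
  rw [← append_right u v]
  congr 1
  ext
  simp only [val_natAdd]
  omega

variable {u₁ v₁ : Fin m → α} {u₂ v₂ : Fin n → α}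

theorem forall_le_append_eq_iff_of_lt {t : ℕ} (ht : t < m) :
    (∀ i : Fin (m + n), (i : ℕ) ≤ t → append v₁ v₂ i = append u₁ u₂ i) ↔
      ∀ i : Fin m, (i : ℕ) ≤ t → v₁ i = u₁ i := by
  rw [forall_fin_add]
  simp only [val_castAdd, val_natAdd, append_left, append_right, and_iff_left_iff_imp]
  intro _ j hj
  omega

theorem forall_le_append_eq_iff_of_le {t : ℕ} (ht : m ≤ t) :
    (∀ i : Fin (m + n), (i : ℕ) ≤ t → append v₁ v₂ i = append u₁ u₂ i) ↔
      v₁ = u₁ ∧ ∀ i : Fin n, (i : ℕ) ≤ t - m → v₂ i = u₂ i := by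
  rw [forall_fin_add, funext_iff]
  simp only [val_castAdd, val_natAdd, append_left, append_right]
  refine and_congr ⟨fun h i => h i (by omega), fun h i _ => h i⟩
    (forall_congr' fun i => imp_congr_left (by omega))

end Fin

namespace Real

theorem logb_natCast_nonneg {b : ℝ} (hb : 1 < b) (k : ℕ) : 0 ≤ logb b k := by
  rcases k.eq_zero_or_pos with rfl | hk
  · simp
  · exact logb_nonneg hb (by exact_mod_cast hk)

theorem logb_natCast_le_add_of_le_mul {b : ℝ} (hb : 1 < b) {k m n : ℕ} (h : k ≤ m * n) :
    logb b k ≤ logb b m + logb b n := by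
  rcases k.eq_zero_or_pos with rfl | hk
  · simpa using add_nonneg (logb_natCast_nonneg hb m) (logb_natCast_nonneg hb n)
  have hm : 0 < m := Nat.pos_of_mul_pos_right (hk.trans_le h)
  have hn : 0 < n := Nat.pos_of_mul_pos_left (hk.trans_le h)
  rw [← logb_mul (by positivity) (by positivity)]
  exact logb_le_logb_of_le hb (by positivity) (by exact_mod_cast h)

end Real

theorem Subadditive.tendsto_coe_inv_mul_iInf {u : ℕ → ℝ} (hu : Subadditive u)
    (hbdd : BddBelow (range fun n => u n / n)) :
    Tendsto (fun n : ℕ => (((n : ℝ)⁻¹ : ℝ) : EReal) * u n) atTop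
      (𝓝 (⨅ (n : ℕ) (_ : 0 < n), (((n : ℝ)⁻¹ : ℝ) : EReal) * u n)) := by
  have hcoe : ∀ n : ℕ, (((n : ℝ)⁻¹ : ℝ) : EReal) * u n = ((u n / n : ℝ) : EReal) := fun n => by
    rw [← EReal.coe_mul, inv_mul_eq_div]
  simp only [hcoe]
  have hlim := EReal.tendsto_coe.2 (hu.tendsto_lim hbdd)
  convert hlim using 2
  refine le_antisymm (ge_of_tendsto hlim ?_) (le_iInf₂ fun n hn => ?_)
  · filter_upwards [eventually_gt_atTop 0] with n hn
    exact iInf₂_le n hn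
  · exact EReal.coe_le_coe_iff.2 (hu.lim_le_div hbdd hn.ne')

section Spanning

variable {τ : ℕ} {𝒜 : Set (Set X)} {𝒮 : Set (Fin τ → Set X)}

theorem Pset_subset (h : ∀ α ∈ 𝒮, ∀ t, α t ∈ 𝒜) (α : Fin τ → Set X) (t : ℕ) :
    Pset 𝒮 α t ⊆ 𝒜 := by
  unfold Pset
  split
  · rintro _ ⟨β, hβ, -, rfl⟩
    exact h β hβ _
  · rintro _ ⟨β, hβ, -, rfl⟩
    exact h β hβ _

theorem le_expNum (h𝒜 : 𝒜.Finite) (h : ∀ α ∈ 𝒮, ∀ t, α t ∈ 𝒜) {α : Fin τ → Set X}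
    (hα : α ∈ 𝒮) : ∏ t ∈ Finset.range τ, (Pset 𝒮 α t).ncard ≤ expNum 𝒮 := by
  refine le_csSup ⟨𝒜.ncard ^ τ, ?_⟩ ⟨α, hα, rfl⟩
  rintro _ ⟨β, -, rfl⟩
  simpa using Finset.prod_le_pow_card (Finset.range τ) _ _ fun t _ =>
    ncard_le_ncard (Pset_subset h β t) h𝒜

theorem expNum_le {n : ℕ} (h : ∀ α ∈ 𝒮, ∏ t ∈ Finset.range τ, (Pset 𝒮 α t).ncard ≤ n) :
    expNum 𝒮 ≤ n :=
  csSup_le' <| by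
    rintro _ ⟨α, hα, rfl⟩
    exact h α hα

variable {F : X → U → Set X} {Q : Set X} {c : InvCover F Q}

theorem isSpanning_setOf_forall_mem_cov (hτ : 0 < τ) :
    IsSpanning F Q c τ {α | ∀ t, α t ∈ c.cov} := by
  refine ⟨fun α hα => hα, fun x hx => ?_, fun α hα t ht x hx y hy => ?_⟩
  · obtain ⟨A, hA, hxA⟩ := c.covers hx
    exact ⟨fun _ => A, fun _ => hA, hτ, hxA⟩
  · obtain ⟨A, hA, hyA⟩ := c.covers (c.inv (α t) (hα t) x hx hy)
    refine mem_biUnion ?_ hyA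
    rw [Pset, dif_pos ht]
    refine ⟨Function.update α ⟨t + 1, ht⟩ A, fun s => ?_, fun s hs => ?_, by simp⟩
    · rcases eq_or_ne s ⟨t + 1, ht⟩ with rfl | hne
      · simpa using hA
      · simpa [hne] using hα s
    · exact Function.update_of_ne (fun h => by simp [h] at hs) _ _

theorem rinv_le_expNum (h : IsSpanning F Q c τ 𝒮) : rinv F Q c τ ≤ expNum 𝒮 :=
  sInf_le ⟨𝒮, h, rfl⟩

theorem exists_isSpanning_rinv_eq (hτ : 0 < τ) :
    ∃ 𝒮 : Set (Fin τ → Set X), IsSpanning F Q c τ 𝒮 ∧ rinv F Q c τ = expNum 𝒮 := by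
  obtain ⟨𝒮, h𝒮, h⟩ := csInf_mem (⟨_, _, isSpanning_setOf_forall_mem_cov hτ, rfl⟩ :
    {n | ∃ 𝒮 : Set (Fin τ → Set X), IsSpanning F Q c τ 𝒮 ∧ n = (expNum 𝒮 : ℕ∞)}.Nonempty)
  exact ⟨𝒮, h𝒮, h⟩

theorem rinv_ne_top (hτ : 0 < τ) : rinv F Q c τ ≠ ⊤ :=
  ne_top_of_le_ne_top (ENat.natCast_ne_top _)
    (rinv_le_expNum (isSpanning_setOf_forall_mem_cov hτ))

end Spanning

section Append

variable {m n t : ℕ} {𝒮₁ : Set (Fin m → Set X)} {𝒮₂ : Set (Fin n → Set X)}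
  {α₁ : Fin m → Set X} {α₂ : Fin n → Set X}

theorem Pset_image2_append_of_lt (ht : t + 1 < m) (hα₂ : α₂ ∈ 𝒮₂) :
    Pset (image2 Fin.append 𝒮₁ 𝒮₂) (Fin.append α₁ α₂) t = Pset 𝒮₁ α₁ t := by
  rw [Pset, Pset, dif_pos (by omega : t + 1 < m + n), dif_pos ht]
  ext A
  constructor
  · rintro ⟨_, ⟨β₁, hβ₁, β₂, -, rfl⟩, hagree, rfl⟩
    exact ⟨β₁, hβ₁, (Fin.forall_le_append_eq_iff_of_lt (by omega)).1 hagree,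
      Fin.append_of_lt _ _ ht⟩
  · rintro ⟨β₁, hβ₁, hagree, rfl⟩
    exact ⟨_, mem_image2_of_mem hβ₁ hα₂, (Fin.forall_le_append_eq_iff_of_lt (by omega)).2 hagree,
      (Fin.append_of_lt (i := ⟨t + 1, by omega⟩) _ _ ht).symm⟩

theorem Pset_image2_append_of_eq (ht : t + 1 = m) (hn : 0 < n) (hα₁ : α₁ ∈ 𝒮₁) :
    Pset (image2 Fin.append 𝒮₁ 𝒮₂) (Fin.append α₁ α₂) t = Pset 𝒮₂ α₂ (n - 1) := by
  rw [Pset, Pset, dif_pos (by omega : t + 1 < m + n), dif_neg (by omega : ¬n - 1 + 1 < n)]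
  have happend (β₁ : Fin m → Set X) (β₂ : Fin n → Set X) :
      Fin.append β₁ β₂ ⟨t + 1, by omega⟩ = β₂ ⟨0, hn⟩ :=
    (Fin.append_of_le _ _ ht.ge).trans (congrArg β₂ (Fin.ext (by simp [ht])))
  ext A
  constructor
  · rintro ⟨_, ⟨β₁, -, β₂, hβ₂, rfl⟩, -, rfl⟩
    exact ⟨β₂, hβ₂, hn, happend β₁ β₂⟩
  · rintro ⟨β₂, hβ₂, -, rfl⟩
    exact ⟨_, mem_image2_of_mem hα₁ hβ₂,
      (Fin.forall_le_append_eq_iff_of_lt (by omega)).2 fun _ _ => rfl, (happend α₁ β₂).symm⟩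

theorem Pset_image2_append_of_le (ht₁ : m ≤ t) (ht₂ : t + 1 < m + n) (hα₁ : α₁ ∈ 𝒮₁) :
    Pset (image2 Fin.append 𝒮₁ 𝒮₂) (Fin.append α₁ α₂) t = Pset 𝒮₂ α₂ (t - m) := by
  rw [Pset, Pset, dif_pos ht₂, dif_pos (by omega : t - m + 1 < n)]
  have happend (β₁ : Fin m → Set X) (β₂ : Fin n → Set X) :
      Fin.append β₁ β₂ ⟨t + 1, ht₂⟩ = β₂ ⟨t - m + 1, by omega⟩ :=
    (Fin.append_of_le _ _ (by simp; omega)).trans (congrArg β₂ (Fin.ext (by simp; omega)))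
  ext A
  constructor
  · rintro ⟨_, ⟨β₁, -, β₂, hβ₂, rfl⟩, hagree, rfl⟩
    exact ⟨β₂, hβ₂, ((Fin.forall_le_append_eq_iff_of_le ht₁).1 hagree).2, happend β₁ β₂⟩
  · rintro ⟨β₂, hβ₂, hagree, rfl⟩
    exact ⟨_, mem_image2_of_mem hα₁ hβ₂, (Fin.forall_le_append_eq_iff_of_le ht₁).2 ⟨rfl, hagree⟩,
      (happend α₁ β₂).symm⟩

theorem Pset_image2_append_subset_of_not_lt (ht : ¬t + 1 < m + n) (hm : 0 < m) :
    Pset (image2 Fin.append 𝒮₁ 𝒮₂) (Fin.append α₁ α₂) t ⊆ Pset 𝒮₁ α₁ (m - 1) := by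
  rw [Pset, Pset, dif_neg ht, dif_neg (by omega : ¬m - 1 + 1 < m)]
  rintro _ ⟨_, ⟨β₁, hβ₁, β₂, -, rfl⟩, -, rfl⟩
  exact ⟨β₁, hβ₁, hm, Fin.append_of_lt _ _ hm⟩

theorem IsSpanning.image2_append {F : X → U → Set X} {Q : Set X} {c : InvCover F Q}
    (h₁ : IsSpanning F Q c m 𝒮₁) (h₂ : IsSpanning F Q c n 𝒮₂) :
    IsSpanning F Q c (m + n) (image2 Fin.append 𝒮₁ 𝒮₂) := by
  refine ⟨?_, fun x hx => ?_, ?_⟩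
  · rintro _ ⟨α₁, hα₁, α₂, hα₂, rfl⟩
    simpa only [Fin.forall_fin_add, Fin.append_left, Fin.append_right] using
      ⟨h₁.1 α₁ hα₁, h₂.1 α₂ hα₂⟩
  · obtain ⟨α₁, hα₁, hm, hx₁⟩ := h₁.2.1 x hx
    obtain ⟨α₂, hα₂, -⟩ := h₂.2.1 x hx
    exact ⟨_, mem_image2_of_mem hα₁ hα₂, by omega, by rwa [Fin.append_of_lt _ _ hm]⟩
  rintro _ ⟨α₁, hα₁, α₂, hα₂, rfl⟩ t ht x hx
  rcases lt_or_ge (t : ℕ) m with htm | htm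
  · rw [Fin.append_of_lt _ _ htm] at hx ⊢
    rcases (Nat.succ_le_of_lt htm).lt_or_eq with ht₁ | ht₁
    · rw [Pset_image2_append_of_lt ht₁ hα₂]
      exact h₁.2.2 α₁ hα₁ ⟨t, htm⟩ ht₁ x hx
    · rw [Pset_image2_append_of_eq ht₁ (by omega) hα₁, Pset, dif_neg (by omega)]
      intro y hy
      obtain ⟨β₂, hβ₂, hn, hyβ⟩ := h₂.2.1 y (c.inv _ (h₁.1 α₁ hα₁ _) x hx hy)
      exact mem_biUnion ⟨β₂, hβ₂, hn, rfl⟩ hyβ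
  · rw [Fin.append_of_le _ _ htm] at hx ⊢
    rw [Pset_image2_append_of_le htm ht hα₁]
    exact h₂.2.2 α₂ hα₂ _ (by simp only; omega) x hx

theorem expNum_image2_append_le {𝒜 : Set (Set X)} (h𝒜 : 𝒜.Finite)
    (h₁ : ∀ α ∈ 𝒮₁, ∀ t, α t ∈ 𝒜) (h₂ : ∀ α ∈ 𝒮₂, ∀ t, α t ∈ 𝒜) (hm : 0 < m) (hn : 0 < n) :
    expNum (image2 Fin.append 𝒮₁ 𝒮₂) ≤ expNum 𝒮₁ * expNum 𝒮₂ := by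
  obtain ⟨m, rfl⟩ := Nat.exists_eq_add_one.2 hm
  obtain ⟨n, rfl⟩ := Nat.exists_eq_add_one.2 hn
  refine expNum_le ?_
  rintro _ ⟨α₁, hα₁, α₂, hα₂, rfl⟩
  set P := fun t => (Pset (image2 Fin.append 𝒮₁ 𝒮₂) (Fin.append α₁ α₂) t).ncard
  set P₁ := fun t => (Pset 𝒮₁ α₁ t).ncard
  set P₂ := fun t => (Pset 𝒮₂ α₂ t).ncard
  have hfirst : ∏ t ∈ Finset.range (m + 1), P t = (∏ t ∈ Finset.range m, P₁ t) * P₂ n := by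
    rw [Finset.prod_range_succ]
    congr 1
    · refine Finset.prod_congr rfl fun t ht => ?_
      dsimp only [P, P₁]
      rw [Pset_image2_append_of_lt (by simpa using ht : t + 1 < m + 1) hα₂]
    · dsimp only [P, P₂]
      rw [Pset_image2_append_of_eq rfl (by omega : 0 < n + 1) hα₁, Nat.add_sub_cancel]
  have hsecond : ∏ s ∈ Finset.range (n + 1), P (m + 1 + s)
      ≤ (∏ s ∈ Finset.range n, P₂ s) * P₁ m := by
    rw [Finset.prod_range_succ]
    refine Nat.mul_le_mul (Finset.prod_congr rfl fun s hs => ?_).le ?_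
    · simp only [Finset.mem_range] at hs
      dsimp only [P, P₂]
      rw [Pset_image2_append_of_le (by omega : m + 1 ≤ m + 1 + s) (by omega) hα₁,
        Nat.add_sub_cancel_left]
    · exact ncard_le_ncard (Pset_image2_append_subset_of_not_lt (by omega) m.succ_pos)
        (h𝒜.subset (Pset_subset h₁ α₁ _))
  calc ∏ t ∈ Finset.range (m + 1 + (n + 1)), P t
      = (∏ t ∈ Finset.range (m + 1), P t) * ∏ s ∈ Finset.range (n + 1), P (m + 1 + s) :=
        Finset.prod_range_add _ _ _
    _ ≤ ((∏ t ∈ Finset.range m, P₁ t) * P₂ n) * ((∏ s ∈ Finset.range n, P₂ s) * P₁ m) :=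
        Nat.mul_le_mul hfirst.le hsecond
    _ = (∏ t ∈ Finset.range (m + 1), P₁ t) * ∏ s ∈ Finset.range (n + 1), P₂ s := by
        rw [Finset.prod_range_succ, Finset.prod_range_succ]
        ring
    _ ≤ expNum 𝒮₁ * expNum 𝒮₂ := Nat.mul_le_mul (le_expNum h𝒜 h₁ hα₁) (le_expNum h𝒜 h₂ hα₂)

end Append

section Entropy

variable {F : X → U → Set X} {Q : Set X} {c : InvCover F Q}

theorem rinv_add_le_mul {m n : ℕ} (hm : 0 < m) (hn : 0 < n) :
    rinv F Q c (m + n) ≤ rinv F Q c m * rinv F Q c n := by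
  obtain ⟨𝒮₁, h₁, hr₁⟩ := exists_isSpanning_rinv_eq (c := c) hm
  obtain ⟨𝒮₂, h₂, hr₂⟩ := exists_isSpanning_rinv_eq (c := c) hn
  rw [hr₁, hr₂, ← Nat.cast_mul]
  exact (rinv_le_expNum (h₁.image2_append h₂)).trans
    (Nat.cast_le.2 (expNum_image2_append_le c.finite h₁.1 h₂.1 hm hn))

variable (F Q c) in
noncomputable def rinvLog (τ : ℕ) : ℝ :=
  Real.logb 2 (rinv F Q c τ).toNat

theorem rinvLog_nonneg (τ : ℕ) : 0 ≤ rinvLog F Q c τ :=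
  Real.logb_natCast_nonneg one_lt_two _

theorem elog2_rinv {τ : ℕ} (hτ : 0 < τ) : elog2 (rinv F Q c τ) = rinvLog F Q c τ := by
  obtain ⟨k, hk⟩ := ENat.ne_top_iff_exists.1 (rinv_ne_top (c := c) hτ)
  rw [rinvLog, ← hk, ENat.toNat_natCast]
  rfl

theorem inv_mul_elog2_rinv (τ : ℕ) :
    (((τ : ℝ)⁻¹ : ℝ) : EReal) * elog2 (rinv F Q c τ) =
      (((τ : ℝ)⁻¹ : ℝ) : EReal) * rinvLog F Q c τ := by
  rcases τ.eq_zero_or_pos with rfl | hτ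
  · simp -- the weight `(0 : ℝ)⁻¹ = 0` also kills `elog2 (rinv F Q c 0)`, which may be `⊤`
  · rw [elog2_rinv hτ]

theorem subadditive_rinvLog : Subadditive (rinvLog F Q c) := by
  intro m n
  rcases m.eq_zero_or_pos with rfl | hm
  · simpa using rinvLog_nonneg 0
  rcases n.eq_zero_or_pos with rfl | hn
  · simpa using rinvLog_nonneg 0
  refine Real.logb_natCast_le_add_of_le_mul one_lt_two ?_
  rw [← ENat.toNat_mul]
  exact ENat.toNat_le_toNat (rinv_add_le_mul hm hn)
    (WithTop.mul_ne_top (rinv_ne_top hm) (rinv_ne_top hn))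

end Entropy

theorem invariance_entropy_subadditive_and_limit_general
    {X U : Type*}
    (F : X → U → Set X)
    (Q : Set X) (c : InvCover F Q) :
    (∀ τ₁ τ₂ : ℕ, 0 < τ₁ → 0 < τ₂ →
      elog2 (rinv F Q c (τ₁ + τ₂)) ≤ elog2 (rinv F Q c τ₁) + elog2 (rinv F Q c τ₂)) ∧
    Tendsto (fun τ : ℕ => (((τ : ℝ)⁻¹ : ℝ) : EReal) * elog2 (rinv F Q c τ)) atTop
      (𝓝 (coverEntropy F Q c)) := by
  refine ⟨fun τ₁ τ₂ h₁ h₂ => ?_, ?_⟩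
  · rw [elog2_rinv h₁, elog2_rinv h₂, elog2_rinv (add_pos h₁ h₂), ← EReal.coe_add,
      EReal.coe_le_coe_iff]
    exact subadditive_rinvLog τ₁ τ₂
  · simp only [coverEntropy, inv_mul_elog2_rinv]
    refine subadditive_rinvLog.tendsto_coe_inv_mul_iInf ⟨0, ?_⟩
    rintro _ ⟨n, rfl⟩
    exact div_nonneg (rinvLog_nonneg n) n.cast_nonneg

/-- For any invariant cover `(𝒜,G)` of a system `Σ = (X,U,F)` and a nonempty
set `Q ⊆ X`, the function `τ ↦ log₂ r_inv(τ,Q)` is subadditive, and consequently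
`(1/τ) log₂ r_inv(τ,Q)` converges as `τ → ∞` to `inf_{τ ≥ 1} (1/τ) log₂ r_inv(τ,Q)`. -/
theorem invariance_entropy_subadditive_and_limit
    {X U : Type*} [Nonempty X] [Nonempty U]
    (F : X → U → Set X) (hF : ∀ x u, (F x u).Nonempty)
    (Q : Set X) (hQ : Q.Nonempty) (c : InvCover F Q) :
    (∀ τ₁ τ₂ : ℕ, 0 < τ₁ → 0 < τ₂ →
      elog2 (rinv F Q c (τ₁ + τ₂)) ≤ elog2 (rinv F Q c τ₁) + elog2 (rinv F Q c τ₂)) ∧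
    Tendsto (fun τ : ℕ => (((τ : ℝ)⁻¹ : ℝ) : EReal) * elog2 (rinv F Q c τ)) atTop
      (𝓝 (coverEntropy F Q c)) :=
  invariance_entropy_subadditive_and_limit_general F Q c
end

section
/- Let (𝒜,G) be an invariant cover of a system Σ=(X,U,F) and a nonempty set Q ⊆ X, and let τ∈ℕ. If 𝒮 is a (τ,Q)-spanning set in (𝒜,G), then the number of elements of 𝒮 is at most its expansion number: #𝒮 ≤ N(𝒮). -/
open Set Filter Topology

variable {X U : Type*}

section CountingAux

variable {X U : Type*}

open scoped Classical in
/-- Auxiliary: the fiber of `S` over the prefix of `α` of length `k`. -/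
noncomputable def fiberF {τ : ℕ} (S : Finset (Fin τ → Set X)) (α : Fin τ → Set X) (k : ℕ) :
    Finset (Fin τ → Set X) :=
  S.filter (fun β => ∀ t : Fin τ, (t : ℕ) < k → β t = α t)

lemma mem_fiberF {τ : ℕ} {S : Finset (Fin τ → Set X)} {α β : Fin τ → Set X} {k : ℕ} :
    β ∈ fiberF S α k ↔ β ∈ S ∧ ∀ t : Fin τ, (t : ℕ) < k → β t = α t := by
  classical
  simp [fiberF]

lemma Pset_congr {τ : ℕ} (𝒮 : Set (Fin τ → Set X)) {α β : Fin τ → Set X} {t : ℕ}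
    (h : ∀ t' : Fin τ, (t' : ℕ) ≤ t → β t' = α t') :
    Pset 𝒮 β t = Pset 𝒮 α t := by
  unfold Pset
  split
  · ext A
    constructor
    · rintro ⟨γ, hγ, hagree, rfl⟩
      exact ⟨γ, hγ, fun t' ht' => (hagree t' ht').trans (h t' ht'), rfl⟩
    · rintro ⟨γ, hγ, hagree, rfl⟩
      exact ⟨γ, hγ, fun t' ht' => (hagree t' ht').trans (h t' ht').symm, rfl⟩
  · rfl

lemma key_aux {τ : ℕ} (hτ : 0 < τ) (𝒮 : Set (Fin τ → Set X)) (hfin : 𝒮.Finite) :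
    ∀ m k, k + m = τ - 1 → ∀ α ∈ hfin.toFinset,
      (fiberF hfin.toFinset α (k + 1)).card ≤
        (fiberF hfin.toFinset α (k + 1)).sup
          (fun β => ∏ t ∈ Finset.Ico k (τ - 1), (Pset 𝒮 β t).ncard) := by
  intro m
  induction m with
  | zero =>
      intro k hk α hα
      have hαfib : α ∈ fiberF hfin.toFinset α (k + 1) :=
        mem_fiberF.mpr ⟨hα, fun t ht => rfl⟩
      have hcard : (fiberF hfin.toFinset α (k + 1)).card ≤ 1 := by
        refine Finset.card_le_one.mpr (fun β hβ γ hγ => ?_)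
        funext t
        rw [(mem_fiberF.mp hβ).2 t (by omega), (mem_fiberF.mp hγ).2 t (by omega)]
      refine hcard.trans ?_
      have hone : (∏ t ∈ Finset.Ico k (τ - 1), (Pset 𝒮 α t).ncard) = 1 := by
        rw [show Finset.Ico k (τ - 1) = ∅ by rw [Finset.Ico_eq_empty]; omega]
        simp
      calc (1 : ℕ) = ∏ t ∈ Finset.Ico k (τ - 1), (Pset 𝒮 α t).ncard := hone.symm
        _ ≤ _ := Finset.le_sup (f := fun β => ∏ t ∈ Finset.Ico k (τ - 1), (Pset 𝒮 β t).ncard) hαfib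
  | succ m ih =>
      intro k hk α hα
      set S := hfin.toFinset with hS
      set fib := fiberF S α (k + 1) with hfib
      have hαfib : α ∈ fib := mem_fiberF.mpr ⟨hα, fun t ht => rfl⟩
      have hk1 : k + 1 < τ := by omega
      set v : (Fin τ → Set X) → Set X := fun β => β ⟨k + 1, hk1⟩ with hv
      classical
      have hcard : fib.card = ∑ A ∈ fib.image v, (fib.filter fun β => v β = A).card :=
        Finset.card_eq_sum_card_image v fib
      set g' : (Fin τ → Set X) → ℕ :=
        fun β => ∏ t ∈ Finset.Ico (k + 1) (τ - 1), (Pset 𝒮 β t).ncard with hg'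
      have hsub : ∀ A ∈ fib.image v,
          (fib.filter fun β => v β = A).card ≤ fib.sup g' := by
        intro A hA
        obtain ⟨β₀, hβ₀, hvA⟩ := Finset.mem_image.mp hA
        have hβ₀S : β₀ ∈ S := (mem_fiberF.mp hβ₀).1
        have hfeq : (fib.filter fun β => v β = A) = fiberF S β₀ (k + 2) := by
          ext β
          rw [Finset.mem_filter, hfib, mem_fiberF, mem_fiberF]
          constructor
          · rintro ⟨⟨hβS, hag⟩, hveq⟩
            refine ⟨hβS, fun t ht => ?_⟩
            rcases Nat.lt_or_ge (t : ℕ) (k + 1) with h' | h'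
            · rw [hag t h', (mem_fiberF.mp hβ₀).2 t h']
            · have ht' : t = ⟨k + 1, hk1⟩ := Fin.ext (show (t : ℕ) = k + 1 by omega)
              rw [ht', show β ⟨k + 1, hk1⟩ = v β from rfl, hveq, ← hvA]
          · rintro ⟨hβS, hag⟩
            refine ⟨⟨hβS, fun t ht => ?_⟩, ?_⟩
            · rw [hag t (by omega), (mem_fiberF.mp hβ₀).2 t ht]
            · show v β = A
              rw [← hvA]
              exact hag ⟨k + 1, hk1⟩ (Nat.lt_succ_self (k + 1))
        rw [hfeq]
        refine (ih (k + 1) (by omega) β₀ hβ₀S).trans ?_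
        refine Finset.sup_mono ?_
        intro β hβ
        rw [mem_fiberF] at hβ ⊢
        refine ⟨hβ.1, fun t ht => ?_⟩
        rw [hβ.2 t (by omega), (mem_fiberF.mp hβ₀).2 t ht]
      have himg : (fib.image v).card = (Pset 𝒮 α k).ncard := by
        rw [← Set.ncard_coe_finset]
        congr 1
        ext A
        rw [Finset.coe_image, Set.mem_image]
        rw [show Pset 𝒮 α k =
          {A | ∃ β ∈ 𝒮, (∀ t' : Fin τ, (t' : ℕ) ≤ k → β t' = α t') ∧ A = β ⟨k + 1, hk1⟩}
          from dif_pos hk1]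
        constructor
        · rintro ⟨β, hβ, rfl⟩
          rw [Finset.mem_coe, hfib, mem_fiberF] at hβ
          exact ⟨β, hfin.mem_toFinset.mp hβ.1, fun t' ht' => hβ.2 t' (by omega), rfl⟩
        · rintro ⟨β, hβ, hag, rfl⟩
          refine ⟨β, ?_, rfl⟩
          rw [Finset.mem_coe, hfib, mem_fiberF]
          exact ⟨hfin.mem_toFinset.mpr hβ, fun t ht => hag t (by omega)⟩
      obtain ⟨βs, hβs, hsup⟩ := Finset.exists_mem_eq_sup fib ⟨α, hαfib⟩ g'
      calc fib.card = ∑ A ∈ fib.image v, (fib.filter fun β => v β = A).card := hcard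
        _ ≤ ∑ _A ∈ fib.image v, fib.sup g' := Finset.sum_le_sum hsub
        _ = (fib.image v).card * fib.sup g' := by rw [Finset.sum_const, smul_eq_mul]
        _ = (Pset 𝒮 α k).ncard * g' βs := by rw [himg, hsup]
        _ = (Pset 𝒮 βs k).ncard * g' βs := by
              rw [Pset_congr 𝒮 (fun t' ht' => (mem_fiberF.mp hβs).2 t' (by omega))]
        _ = ∏ t ∈ Finset.Ico k (τ - 1), (Pset 𝒮 βs t).ncard := by
              rw [Finset.prod_eq_prod_Ico_succ_bot (by omega : k < τ - 1)]
        _ ≤ fib.sup (fun β => ∏ t ∈ Finset.Ico k (τ - 1), (Pset 𝒮 β t).ncard) :=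
              Finset.le_sup (f := fun β => ∏ t ∈ Finset.Ico k (τ - 1), (Pset 𝒮 β t).ncard) hβs

lemma main_count {τ : ℕ} (hτ : 0 < τ) (𝒮 : Set (Fin τ → Set X)) (hfin : 𝒮.Finite)
    (hne : 𝒮.Nonempty) :
    ∃ α ∈ 𝒮, hfin.toFinset.card ≤ ∏ t ∈ Finset.range τ, (Pset 𝒮 α t).ncard := by
  classical
  set S := hfin.toFinset with hS
  have hSne : S.Nonempty := hfin.toFinset_nonempty.mpr hne
  set v : (Fin τ → Set X) → Set X := fun β => β ⟨0, hτ⟩ with hv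
  set g' : (Fin τ → Set X) → ℕ :=
    fun β => ∏ t ∈ Finset.Ico 0 (τ - 1), (Pset 𝒮 β t).ncard with hg'
  have hcard : S.card = ∑ A ∈ S.image v, (S.filter fun β => v β = A).card :=
    Finset.card_eq_sum_card_image v S
  have hsub : ∀ A ∈ S.image v, (S.filter fun β => v β = A).card ≤ S.sup g' := by
    intro A hA
    obtain ⟨β₀, hβ₀, hvA⟩ := Finset.mem_image.mp hA
    have hfeq : (S.filter fun β => v β = A) = fiberF S β₀ 1 := by
      ext β
      rw [Finset.mem_filter, mem_fiberF]
      constructor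
      · rintro ⟨hβS, hveq⟩
        refine ⟨hβS, fun t ht => ?_⟩
        have ht' : t = ⟨0, hτ⟩ := Fin.ext (show (t : ℕ) = 0 by omega)
        rw [ht', show β ⟨0, hτ⟩ = v β from rfl, hveq, ← hvA]
      · rintro ⟨hβS, hag⟩
        refine ⟨hβS, ?_⟩
        show v β = A
        rw [← hvA]
        exact hag ⟨0, hτ⟩ Nat.one_pos
    rw [hfeq]
    refine (key_aux hτ 𝒮 hfin (τ - 1) 0 (by omega) β₀ hβ₀).trans ?_
    exact Finset.sup_mono (fun β hβ => (mem_fiberF.mp hβ).1)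
  obtain ⟨αs, hαs, hsup⟩ := Finset.exists_mem_eq_sup S hSne g'
  have hαs𝒮 : αs ∈ 𝒮 := hfin.mem_toFinset.mp hαs
  have himg : (S.image v).card = (Pset 𝒮 αs (τ - 1)).ncard := by
    rw [← Set.ncard_coe_finset]
    congr 1
    ext A
    rw [Finset.coe_image, Set.mem_image]
    rw [show Pset 𝒮 αs (τ - 1) = {A | ∃ β ∈ 𝒮, ∃ h0 : 0 < τ, A = β ⟨0, h0⟩}
      from dif_neg (by omega)]
    constructor
    · rintro ⟨β, hβ, rfl⟩
      exact ⟨β, hfin.mem_toFinset.mp (Finset.mem_coe.mp hβ), hτ, rfl⟩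
    · rintro ⟨β, hβ, h0, rfl⟩
      exact ⟨β, Finset.mem_coe.mpr (hfin.mem_toFinset.mpr hβ), rfl⟩
  refine ⟨αs, hαs𝒮, ?_⟩
  have hrange : Finset.range τ = insert (τ - 1) (Finset.Ico 0 (τ - 1)) := by
    ext i
    simp only [Finset.mem_range, Finset.mem_insert, Finset.mem_Ico]
    omega
  calc S.card = ∑ A ∈ S.image v, (S.filter fun β => v β = A).card := hcard
    _ ≤ ∑ _A ∈ S.image v, S.sup g' := Finset.sum_le_sum hsub
    _ = (S.image v).card * S.sup g' := by rw [Finset.sum_const, smul_eq_mul]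
    _ = (Pset 𝒮 αs (τ - 1)).ncard * g' αs := by rw [himg, hsup]
    _ = ∏ t ∈ Finset.range τ, (Pset 𝒮 αs t).ncard := by
        rw [hrange, Finset.prod_insert (by simp)]

end CountingAux

/-- If `𝒮` is a `(τ,Q)`-spanning set in an invariant cover `(𝒜,G)`,
then `#𝒮 ≤ N(𝒮)`. -/
theorem card_spanning_le_expansion_number
    {X U : Type*} [Nonempty X] [Nonempty U]
    (F : X → U → Set X) (hF : ∀ x u, (F x u).Nonempty)
    (Q : Set X) (hQ : Q.Nonempty) (c : InvCover F Q)
    (τ : ℕ) (hτ : 0 < τ) (𝒮 : Set (Fin τ → Set X))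
    (h𝒮 : IsSpanning F Q c τ 𝒮) :
    𝒮.encard ≤ (expNum 𝒮 : ℕ∞) := by
  classical
  obtain ⟨x, hx⟩ := hQ
  obtain ⟨α₀, hα₀, h0, -⟩ := h𝒮.2.1 x hx
  have hfin : 𝒮.Finite := by
    refine Set.Finite.subset (Set.Finite.pi (fun _ : Fin τ => c.finite)) ?_
    intro α hα
    exact Set.mem_univ_pi.mpr (fun t => h𝒮.1 α hα t)
  obtain ⟨αs, hαs, hcard⟩ := main_count hτ 𝒮 hfin ⟨α₀, hα₀⟩
  rw [hfin.encard_eq_coe_toFinset_card, Nat.cast_le]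
  refine hcard.trans (le_csSup ?_ ⟨αs, hαs, rfl⟩)
  have hMeq : {n | ∃ α ∈ 𝒮, n = ∏ t ∈ Finset.range τ, (Pset 𝒮 α t).ncard}
      = (fun α => ∏ t ∈ Finset.range τ, (Pset 𝒮 α t).ncard) '' 𝒮 := by
    ext n
    simp only [Set.mem_setOf_eq, Set.mem_image]
    constructor
    · rintro ⟨α, hα, rfl⟩; exact ⟨α, hα, rfl⟩
    · rintro ⟨α, hα, rfl⟩; exact ⟨α, hα, rfl⟩
  rw [hMeq]
  exact (hfin.image _).bddAbove
end

section
/- Let Σ=(X,U,F) be a system and Q ⊆ X a nonempty set. There exists an invariant cover (𝒜,G) of Σ and Q if and only if the invariance feedback entropy h_inv of Σ and Q is finite. -/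
open Set Filter Topology

variable {X U : Type*}

/-- There exists an invariant cover of `Σ` and `Q` iff `h_inv < ∞`. -/
theorem exists_invCover_iff_invEntropy_lt_top
    {X U : Type*} [Nonempty X] [Nonempty U]
    (F : X → U → Set X) (hF : ∀ x u, (F x u).Nonempty)
    (Q : Set X) (hQ : Q.Nonempty) :
    Nonempty (InvCover F Q) ↔ invEntropy F Q < ⊤ := by
  constructor
  · rintro ⟨c⟩
    set 𝒮 : Set (Fin 1 → Set X) := {α | ∃ A ∈ c.cov, α = fun _ => A} with h𝒮
    have hspan : IsSpanning F Q c 1 𝒮 := by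
      refine ⟨?_, ?_, ?_⟩
      · rintro α ⟨A, hA, rfl⟩ t; exact hA
      · intro x hx
        obtain ⟨A, hA, hxA⟩ := c.covers hx
        exact ⟨fun _ => A, ⟨A, hA, rfl⟩, Nat.one_pos, hxA⟩
      · rintro α hα t ht
        omega
    have hr : rinv F Q c 1 ≤ (expNum 𝒮 : ℕ∞) := sInf_le ⟨𝒮, hspan, rfl⟩
    have hrlt : rinv F Q c 1 < ⊤ :=
      lt_of_le_of_lt hr (WithTop.coe_lt_top _)
    obtain ⟨n, hn⟩ := WithTop.ne_top_iff_exists.mp hrlt.ne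
    have helog : elog2 (rinv F Q c 1) = ((Real.logb 2 n : ℝ) : EReal) := by
      rw [← hn]; rfl
    have hterm : (((((1 : ℕ) : ℝ)⁻¹ : ℝ) : EReal) * elog2 (rinv F Q c 1)) < ⊤ := by
      rw [helog]
      simp only [Nat.cast_one, inv_one, EReal.coe_one, one_mul]
      exact EReal.coe_lt_top _
    have h1 : invEntropy F Q ≤ coverEntropy F Q c := iInf_le _ c
    have h2 : coverEntropy F Q c ≤
        (((((1 : ℕ) : ℝ)⁻¹ : ℝ) : EReal) * elog2 (rinv F Q c 1)) := by
      exact iInf₂_le 1 Nat.one_pos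
    exact lt_of_le_of_lt (h1.trans h2) hterm
  · intro h
    by_contra hne
    have : IsEmpty (InvCover F Q) := not_nonempty_iff.mp hne
    rw [invEntropy, iInf_of_empty] at h
    exact lt_irrefl _ h
end

section
/- Let Σ=(X,U,F) be a finite system (both X and U are finite sets) and Q ⊆ X a nonempty set. Then the invariance feedback entropy h_inv of Σ and Q is finite if and only if Q is controlled invariant with respect to Σ. -/
open Set Filter Topology

variable {X U : Type*}

/-- For a finite system, `h_inv < ∞` iff `Q` is controlled invariant. -/
theorem invEntropy_lt_top_iff_controlled_invariant
    {X U : Type*} [Finite X] [Finite U] [Nonempty X] [Nonempty U]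
    (F : X → U → Set X) (hF : ∀ x u, (F x u).Nonempty)
    (Q : Set X) (hQ : Q.Nonempty) :
    invEntropy F Q < ⊤ ↔ ∀ x ∈ Q, ∃ u : U, F x u ⊆ Q := by
  constructor
  · intro h x hx
    rw [invEntropy] at h
    obtain ⟨c, -⟩ := iInf_lt_iff.mp h
    obtain ⟨A, hA, hxA⟩ := c.covers hx
    exact ⟨c.G A, c.inv A hA x hxA⟩
  · intro h
    classical
    -- choose a control for each state
    have huX : ∀ x : X, ∃ u : U, x ∈ Q → F x u ⊆ Q := by
      intro x
      by_cases hx : x ∈ Q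
      · obtain ⟨u, hu⟩ := h x hx
        exact ⟨u, fun _ => hu⟩
      · exact ⟨Classical.arbitrary U, fun hx' => absurd hx' hx⟩
    choose g hg using huX
    -- the invariant cover by singletons
    set G : Set X → U := fun A => if hA : A.Nonempty then g hA.choose else g (Classical.arbitrary X) with hG
    let c : InvCover F Q :=
      { cov := {A : Set X | ∃ x ∈ Q, A = {x}}
        G := G
        finite := Set.toFinite _
        subset := by
          rintro A ⟨x, hx, rfl⟩
          simpa using hx
        covers := by
          intro x hx
          exact ⟨{x}, ⟨x, hx, rfl⟩, rfl⟩
        inv := by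
          rintro A ⟨x, hx, rfl⟩ y hy
          rcases hy with rfl
          have hne : ({y} : Set X).Nonempty := ⟨y, rfl⟩
          have hch : hne.choose = y := hne.choose_spec
          have : G {y} = g y := by
            rw [hG]; simp only [dif_pos hne, hch]
          rw [this]
          exact hg y hx }
    -- the spanning set for τ = 1
    set 𝒮 : Set (Fin 1 → Set X) := {α | ∃ x ∈ Q, α = fun _ => ({x} : Set X)} with h𝒮
    have hspan : IsSpanning F Q c 1 𝒮 := by
      refine ⟨?_, ?_, ?_⟩
      · rintro α ⟨x, hx, rfl⟩ t
        exact ⟨x, hx, rfl⟩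
      · intro x hx
        exact ⟨fun _ => {x}, ⟨x, hx, rfl⟩, one_pos, rfl⟩
      · intro α hα t ht
        omega
    -- the Pset is independent of α
    have hPset : ∀ α ∈ 𝒮, Pset 𝒮 α 0 = {A : Set X | ∃ x ∈ Q, A = {x}} := by
      intro α hα
      rw [Pset, dif_neg (by omega)]
      ext A
      constructor
      · rintro ⟨β, ⟨x, hx, rfl⟩, h0, rfl⟩
        exact ⟨x, hx, rfl⟩
      · rintro ⟨x, hx, rfl⟩
        exact ⟨fun _ => {x}, ⟨x, hx, rfl⟩, one_pos, rfl⟩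
    set k : ℕ := ({A : Set X | ∃ x ∈ Q, A = {x}}).ncard with hk
    have hexp : expNum 𝒮 = k := by
      have hset : {n | ∃ α ∈ 𝒮, n = ∏ t ∈ Finset.range 1, (Pset 𝒮 α t).ncard} = {k} := by
        ext n
        simp only [Set.mem_setOf_eq, Set.mem_singleton_iff, Finset.range_one,
          Finset.prod_singleton]
        constructor
        · rintro ⟨α, hα, rfl⟩
          rw [hPset α hα]
        · rintro rfl
          obtain ⟨x, hx⟩ := hQ
          refine ⟨fun _ => {x}, ⟨x, hx, rfl⟩, ?_⟩
          rw [hPset _ ⟨x, hx, rfl⟩]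
      rw [expNum, hset, csSup_singleton]
    have hr : rinv F Q c 1 ≤ (k : ℕ∞) := by
      apply sInf_le
      exact ⟨𝒮, hspan, by rw [hexp]⟩
    have hrlt : rinv F Q c 1 < ⊤ := lt_of_le_of_lt hr (WithTop.coe_lt_top k)
    obtain ⟨m, hm⟩ : ∃ m : ℕ, (m : ℕ∞) = rinv F Q c 1 :=
      WithTop.ne_top_iff_exists.mp hrlt.ne
    have helog : elog2 (rinv F Q c 1) = ((Real.logb 2 m : ℝ) : EReal) := by
      rw [← hm]; rfl
    have hcov : coverEntropy F Q c < ⊤ := by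
      refine lt_of_le_of_lt (iInf₂_le 1 one_pos) ?_
      rw [helog]
      have : (((1 : ℕ) : ℝ)⁻¹ : ℝ) = (1 : ℝ) := by norm_num
      rw [this]
      calc ((1 : ℝ) : EReal) * ((Real.logb 2 m : ℝ) : EReal)
          = ((Real.logb 2 m : ℝ) : EReal) := by
            rw [← EReal.coe_mul, one_mul]
        _ < ⊤ := EReal.coe_lt_top _
    exact lt_of_le_of_lt (iInf_le _ c) hcov
end

section
/- Let Σ=(X,U,F) be a topological system (X is a topological space) and let Q be a nonempty compact subset of X. If for every u∈U the set-valued map F(·,u) : X ⇉ X is upper semicontinuous, and Q is strongly controlled invariant, i.e. for every x∈Q there exists u∈U such that F(x,u) ⊆ int Q, then the invariance feedback entropy h_inv of Σ and Q is finite. -/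
open Set Filter Topology

variable {X U : Type*}

/-! Compactness and upper semicontinuity turn the pointwise inputs steering into `int Q` into
finitely many neighbourhoods `O` with one input each that steers all of `O` into `Q`; the sets
`O ∩ Q` form an invariant cover. Every invariant cover has finite entropy, because the
sequences of length one starting in a cover element already form a `(1,Q)`-spanning set. -/

namespace InvCover

variable {F : X → U → Set X} {Q : Set X}

noncomputable def ofForallExists [Nonempty U] (cov : Set (Set X)) (hfin : cov.Finite)
    (hsub : ∀ A ∈ cov, A ⊆ Q) (hcov : Q ⊆ ⋃₀ cov)
    (hinv : ∀ A ∈ cov, ∃ u, ∀ x ∈ A, F x u ⊆ Q) : InvCover F Q := by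
  classical
  exact
    { cov := cov
      G := fun A => if h : A ∈ cov then (hinv A h).choose else Classical.arbitrary U
      finite := hfin
      subset := hsub
      covers := hcov
      inv := fun A hA => by simpa only [dif_pos hA] using (hinv A hA).choose_spec }

theorem isSpanning_one (c : InvCover F Q) : IsSpanning F Q c 1 {α | α 0 ∈ c.cov} := by
  refine ⟨fun α hα t => Subsingleton.elim t 0 ▸ hα, fun x hx => ?_, fun α _ t ht => ?_⟩
  · obtain ⟨A, hA, hxA⟩ := c.covers hx
    exact ⟨fun _ => A, hA, one_pos, hxA⟩
  · omega

theorem rinv_one_ne_top (c : InvCover F Q) : rinv F Q c 1 ≠ ⊤ :=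
  ne_top_of_le_ne_top WithTop.coe_ne_top (sInf_le ⟨_, c.isSpanning_one, rfl⟩)

theorem coverEntropy_lt_top (c : InvCover F Q) : coverEntropy F Q c < ⊤ := by
  obtain ⟨m, hm⟩ := WithTop.ne_top_iff_exists.1 c.rinv_one_ne_top
  refine lt_of_le_of_lt (iInf₂_le (f := fun (τ : ℕ) (_ : 0 < τ) =>
    (((τ : ℝ)⁻¹ : ℝ) : EReal) * elog2 (rinv F Q c τ)) 1 one_pos) ?_
  rw [← hm]
  exact EReal.coe_mul _ _ ▸ EReal.coe_lt_top _

end InvCover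

theorem invEntropy_lt_top_of_invCover {F : X → U → Set X} {Q : Set X} (c : InvCover F Q) :
    invEntropy F Q < ⊤ :=
  (iInf_le _ c).trans_lt c.coverEntropy_lt_top

theorem exists_finite_invariant_cover_of_usc [TopologicalSpace X] {F : X → U → Set X}
    {Q : Set X} (hQc : IsCompact Q)
    (husc : ∀ (u : U) (x : X) (V : Set X), IsOpen V → F x u ⊆ V →
      ∃ O : Set X, IsOpen O ∧ x ∈ O ∧ ∀ y ∈ O, F y u ⊆ V)
    (hsci : ∀ x ∈ Q, ∃ u : U, F x u ⊆ interior Q) :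
    ∃ cov : Set (Set X), cov.Finite ∧ (∀ A ∈ cov, A ⊆ Q) ∧ Q ⊆ ⋃₀ cov ∧
      ∀ A ∈ cov, ∃ u, ∀ x ∈ A, F x u ⊆ Q := by
  have hlocal : ∀ x ∈ Q, ∃ O ∈ 𝓝 x, ∃ u, ∀ y ∈ O, F y u ⊆ interior Q := fun x hx => by
    obtain ⟨u, hu⟩ := hsci x hx
    obtain ⟨O, hO_open, hxO, hO⟩ := husc u x _ isOpen_interior hu
    exact ⟨O, hO_open.mem_nhds hxO, u, hO⟩
  choose O hO_nhds hO using hlocal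
  obtain ⟨t, hQt⟩ := hQc.elim_nhds_subcover' O hO_nhds
  refine ⟨(fun x : Q => O x x.2 ∩ Q) '' t, t.finite_toSet.image _, ?_, fun y hy => ?_, ?_⟩
  · rintro A ⟨x, -, rfl⟩
    exact inter_subset_right
  · obtain ⟨x, hxt, hyO⟩ := mem_iUnion₂.1 (hQt hy)
    exact ⟨O x x.2 ∩ Q, ⟨x, hxt, rfl⟩, hyO, hy⟩
  · rintro A ⟨x, -, rfl⟩
    obtain ⟨u, hu⟩ := hO x x.2
    exact ⟨u, fun y hy => (hu y hy.1).trans interior_subset⟩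

theorem invEntropy_lt_top_of_usc_strongly_controlled_invariant_general
    {X U : Type*} [TopologicalSpace X] [Nonempty U]
    (F : X → U → Set X)
    (Q : Set X) (hQc : IsCompact Q)
    (husc : ∀ (u : U) (x : X) (V : Set X), IsOpen V → F x u ⊆ V →
      ∃ O : Set X, IsOpen O ∧ x ∈ O ∧ ∀ y ∈ O, F y u ⊆ V)
    (hsci : ∀ x ∈ Q, ∃ u : U, F x u ⊆ interior Q) :
    invEntropy F Q < ⊤ := by
  obtain ⟨cov, hfin, hsub, hcov, hinv⟩ := exists_finite_invariant_cover_of_usc hQc husc hsci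
  exact invEntropy_lt_top_of_invCover (InvCover.ofForallExists cov hfin hsub hcov hinv)

/-- For a topological system with `Q` nonempty and compact, if `F(·,u)` is
upper semicontinuous for every `u` and `Q` is strongly controlled invariant, then
`h_inv < ∞`. -/
theorem invEntropy_lt_top_of_usc_strongly_controlled_invariant
    {X U : Type*} [TopologicalSpace X] [Nonempty X] [Nonempty U]
    (F : X → U → Set X) (hF : ∀ x u, (F x u).Nonempty)
    (Q : Set X) (hQ : Q.Nonempty) (hQc : IsCompact Q)
    (husc : ∀ (u : U) (x : X) (V : Set X), IsOpen V → F x u ⊆ V →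
      ∃ O : Set X, IsOpen O ∧ x ∈ O ∧ ∀ y ∈ O, F y u ⊆ V)
    (hsci : ∀ x ∈ Q, ∃ u : U, F x u ⊆ interior Q) :
    invEntropy F Q < ⊤ :=
  invEntropy_lt_top_of_usc_strongly_controlled_invariant_general F Q hQc husc hsci
end

section
/- Let Σ=(X,U,F) be a system, Q ⊆ X nonempty, (𝒜,G) an invariant cover of Σ and Q, τ∈ℕ, and 𝒮 a (τ,Q)-spanning set in (𝒜,G). Then there exists a Q-admissible τ-periodic coder-controller H=(S,γ,δ) for Σ such that (1/τ) log₂ N(𝒮) ≥ R(H). -/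
open Set Filter Topology

variable {X U : Type*}

variable {X U S : Type*}

/-- A coder-controller `(S, γ, δ)`: at each time `t` the coder maps the state history
`X^{[0;t]}` to a symbol in `S` and the controller maps the symbol history `S^{[0;t]}`
to an input. -/
structure CoderController (X U S : Type*) where
  γ : (t : ℕ) → (Fin (t + 1) → X) → S
  δ : (t : ℕ) → (Fin (t + 1) → S) → U

/-- `Γ_t(ξ)`: the symbol sequence generated by the state sequence `ξ ∈ X^{[0;t]}`. -/
def Gam (H : CoderController X U S) (t : ℕ) (ξ : Fin (t + 1) → X) : Fin (t + 1) → S :=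
  fun t' => H.γ t' (fun i : Fin ((t' : ℕ) + 1) => ξ ⟨i, by omega⟩)

/-- `(ξ,ν)` is a trajectory of the system on `[0;∞)`. -/
def IsTraj (F : X → U → Set X) (ξ : ℕ → X) (ν : ℕ → U) : Prop :=
  ∀ t : ℕ, ξ (t + 1) ∈ F (ξ t) (ν t)

/-- `Z(ζ)`: the set of possible successor symbols of the symbol sequence `ζ ∈ S^{[0;t)}`
in the closed loop, with the convention `Z(∅) = S`. -/
def Zset (F : X → U → Set X) (H : CoderController X U S) {t : ℕ} (ζ : Fin t → S) :
    Set S :=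
  if t = 0 then Set.univ
  else
    {s | ∃ ξ : ℕ → X, ∃ ν : ℕ → U, IsTraj F ξ ν ∧
      (∀ k : Fin t, H.γ (k : ℕ) (fun i : Fin ((k : ℕ) + 1) => ξ i) = ζ k) ∧
      H.γ t (fun i : Fin (t + 1) => ξ i) = s ∧
      (∀ k : Fin t, ν (k : ℕ) = H.δ (k : ℕ) (fun i : Fin ((k : ℕ) + 1) => ζ ⟨i, by omega⟩))}

/-- `𝒵_τ`: the set of symbol sequences of length `τ` that can occur in the closed loop. -/
def ZTau (F : X → U → Set X) (H : CoderController X U S) (τ : ℕ) :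
    Set (Fin τ → S) :=
  {ζ | (∀ h0 : 0 < τ, ∃ x : X, ζ ⟨0, h0⟩ = H.γ 0 (fun _ => x)) ∧
    (∀ k : Fin τ, 0 < (k : ℕ) →
      ζ k ∈ Zset F H (fun i : Fin (k : ℕ) => ζ ⟨i, by omega⟩))}

/-- The worst-case average amount of transmitted information over the horizon `[0;τ)`. -/
noncomputable def rateAt (F : X → U → Set X) (H : CoderController X U S) (τ : ℕ) : ℝ :=
  sSup {r | ∃ ζ ∈ ZTau F H τ, r = (τ : ℝ)⁻¹ *
    ∑ k : Fin τ, Real.logb 2 ((Zset F H (fun i : Fin (k : ℕ) => ζ ⟨i, by omega⟩)).ncard)}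

/-- The transmission data rate `R(H)` of a coder-controller. -/
noncomputable def dataRate (F : X → U → Set X) (H : CoderController X U S) : ℝ :=
  Filter.limsup (fun τ : ℕ => rateAt F H τ) Filter.atTop

/-- `H` is `Q`-admissible: every closed-loop trajectory starting in `Q` remains in `Q`. -/
def QAdmissible (F : X → U → Set X) (Q : Set X) (H : CoderController X U S) : Prop :=
  ∀ (ξ : ℕ → X) (ν : ℕ → U), IsTraj F ξ ν → ξ 0 ∈ Q →
    (∀ t : ℕ, ν t = H.δ t (Gam H t (fun i : Fin (t + 1) => ξ i))) →
    ∀ t : ℕ, ξ t ∈ Q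

/-- `H` is `τ`-periodic. -/
def IsPeriodic (H : CoderController X U S) (τ : ℕ) : Prop :=
  (∀ (t : ℕ) (ξ : Fin (t + 1) → X),
    H.γ t ξ = H.γ (t % τ) (fun i : Fin (t % τ + 1) =>
      ξ ⟨τ * (t / τ) + i, by have h := Nat.div_add_mod t τ; omega⟩)) ∧
  (∀ (t : ℕ) (ζ : Fin (t + 1) → S),
    H.δ t ζ = H.δ (t % τ) (fun i : Fin (t % τ + 1) =>
      ζ ⟨τ * (t / τ) + i, by have h := Nat.div_add_mod t τ; omega⟩))

/-!
The coder tracks, inside each period of length `τ`, a sequence `β ∈ 𝒮` whose elements contain the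
states seen so far: at the start of a period it picks an initial cover element containing the
state, and afterwards it moves to a sequence of `𝒮` with the same prefix whose next element
contains the new state. The spanning property (and, at the end of a period, the invariance of
the cover) guarantees that such an element exists, so the state never leaves `Q`. The symbol
sent is the tracked sequence itself, and the controller applies `G` to its current element.
Given the previous symbol `β` at position `r`, only the `#P(β|_{[0;r]})` extensions can follow,
and along a period all these prefixes are prefixes of the last tracked sequence `α`; hence a
period costs at most `log₂ ∏ₜ #P(α|_{[0;t]}) ≤ log₂ N(𝒮)` bits, apart from the `log₂ #S` bits
of the very first symbol, which vanish in the average.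
-/

theorem Real.logb_two_natCast_nonneg (n : ℕ) : 0 ≤ Real.logb 2 n :=
  div_nonneg (Real.log_natCast_nonneg n) (Real.log_nonneg one_le_two)

theorem Real.logb_two_natCast_le {m n : ℕ} (h : m ≤ n) : Real.logb 2 m ≤ Real.logb 2 n := by
  rcases m.eq_zero_or_pos with rfl | hm
  · simpa using Real.logb_two_natCast_nonneg n
  · exact Real.logb_le_logb_of_le one_lt_two (by positivity) (by exact_mod_cast h)

theorem Finset.sum_range_mul_eq_sum_sum {M : Type*} [AddCommMonoid M] (f : ℕ → M) (n m : ℕ) :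
    ∑ k ∈ Finset.range (n * m), f k =
      ∑ q ∈ Finset.range m, ∑ r ∈ Finset.range n, f (n * q + r) := by
  induction m with
  | zero => simp
  | succ m ih => rw [Nat.mul_succ, Finset.sum_range_add, ih, Finset.sum_range_succ]

theorem limsup_le_of_le_add_div {u : ℕ → ℝ} {a C : ℝ} (hu : ∀ n, 0 ≤ u n)
    (h : ∀ n : ℕ, u (n + 1) ≤ a + C / (n + 1)) : limsup u atTop ≤ a := by
  have hlim : Tendsto (fun n : ℕ => a + C / n) atTop (𝓝 a) := by
    simpa using tendsto_const_nhds.add (tendsto_const_div_atTop_nhds_zero_nat C)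
  have hle : ∀ᶠ n in atTop, u n ≤ a + C / n := by
    refine eventually_atTop.2 ⟨1, fun n hn => ?_⟩
    obtain ⟨m, rfl⟩ := Nat.exists_eq_add_of_le' hn
    exact_mod_cast h m
  calc limsup u atTop ≤ limsup (fun n : ℕ => a + C / n) atTop :=
        limsup_le_limsup hle (isBoundedUnder_of ⟨0, hu⟩).isCoboundedUnder_le
          hlim.isBoundedUnder_le
    _ = a := hlim.limsup_eq

theorem rateAt_nonneg {F : X → U → Set X} (H : CoderController X U S) (τ : ℕ) :
    0 ≤ rateAt F H τ :=
  Real.sSup_nonneg fun _ ⟨_, _, hr⟩ => hr ▸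
    mul_nonneg (by positivity) (Finset.sum_nonneg fun _ _ => Real.logb_two_natCast_nonneg _)

section Spanning

variable {F : X → U → Set X} {Q : Set X} {c : InvCover F Q} {τ : ℕ} {𝒮 : Set (Fin τ → Set X)}

theorem IsSpanning.finite (h : IsSpanning F Q c τ 𝒮) : 𝒮.Finite :=
  (Set.Finite.pi fun _ => c.finite).subset fun α hα i _ => h.1 α hα i

theorem IsSpanning.subset_biUnion_Pset_of_not_lt (h : IsSpanning F Q c τ 𝒮)
    (α : Fin τ → Set X) {r : ℕ} (hr : ¬ r + 1 < τ) : Q ⊆ ⋃ A ∈ Pset 𝒮 α r, A := by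
  intro x hx
  obtain ⟨β, hβ, h0, hxβ⟩ := h.2.1 x hx
  rw [Pset, dif_neg hr]
  exact Set.mem_iUnion₂.2 ⟨_, ⟨β, hβ, h0, rfl⟩, hxβ⟩

/-- The spanning condition, extended to the last position by the invariance of the cover. -/
theorem IsSpanning.image_subset_biUnion_Pset (h : IsSpanning F Q c τ 𝒮) {α : Fin τ → Set X}
    (hα : α ∈ 𝒮) (r : Fin τ) {x : X} (hx : x ∈ α r) :
    F x (c.G (α r)) ⊆ ⋃ A ∈ Pset 𝒮 α r, A := by
  by_cases hr : (r : ℕ) + 1 < τ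
  · exact h.2.2 α hα r hr x hx
  · exact (c.inv _ (h.1 α hα r) x hx).trans (h.subset_biUnion_Pset_of_not_lt α hr)

end Spanning

namespace SpanningCoder

open Fin.NatCast

open Classical in
/-- A member of `P` containing `x`, if there is one. -/
noncomputable def pick {α : Type*} (P : Set (Set α)) (x : α) : Set α :=
  if h : ∃ A ∈ P, x ∈ A then h.choose else if h' : P.Nonempty then h'.some else ∅

theorem pick_mem {α : Type*} {P : Set (Set α)} (hP : P.Nonempty) (x : α) : pick P x ∈ P := by
  unfold pick
  split_ifs with h
  exacts [h.choose_spec.1, hP.some_mem]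

theorem mem_pick {α : Type*} {P : Set (Set α)} {x : α} (hx : x ∈ ⋃ A ∈ P, A) :
    x ∈ pick P x := by
  obtain ⟨A, hA, hxA⟩ := Set.mem_iUnion₂.1 hx
  have h : ∃ A ∈ P, x ∈ A := ⟨A, hA, hxA⟩
  rw [pick, dif_pos h]
  exact h.choose_spec.2

section Pset

variable {τ : ℕ} (𝒮 : Set (Fin τ → Set X))

theorem Pset_congr {α α' : Fin τ → Set X} {r : ℕ}
    (h : r + 1 < τ → ∀ i : Fin τ, (i : ℕ) ≤ r → α i = α' i) : Pset 𝒮 α r = Pset 𝒮 α' r := by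
  unfold Pset
  split_ifs with hr
  · ext A
    constructor <;> rintro ⟨β, hβ, hpre, rfl⟩
    · exact ⟨β, hβ, fun i hi => (hpre i hi).trans (h hr i hi), rfl⟩
    · exact ⟨β, hβ, fun i hi => (hpre i hi).trans (h hr i hi).symm, rfl⟩
  · rfl

theorem Pset_finite [Finite 𝒮] (α : Fin τ → Set X) (r : ℕ) : (Pset 𝒮 α r).Finite := by
  refine (Set.finite_range fun p : 𝒮 × Fin τ => p.1.1 p.2).subset ?_
  unfold Pset
  split_ifs <;> rintro A ⟨β, hβ, -, rfl⟩ <;> exact ⟨(⟨β, hβ⟩, _), rfl⟩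

variable [NeZero τ]

theorem Pset_nonempty {α : Fin τ → Set X} (hα : α ∈ 𝒮) (r : ℕ) : (Pset 𝒮 α r).Nonempty := by
  unfold Pset
  split_ifs with hr
  · exact ⟨_, α, hα, fun _ _ => rfl, rfl⟩
  · exact ⟨_, α, hα, NeZero.pos τ, rfl⟩

theorem sum_logb_ncard_Pset_le [Finite 𝒮] {α : Fin τ → Set X} (hα : α ∈ 𝒮) :
    ∑ r ∈ Finset.range τ, Real.logb 2 (Pset 𝒮 α r).ncard ≤ Real.logb 2 (expNum 𝒮) := by
  have hpos : ∀ r, 0 < (Pset 𝒮 α r).ncard := fun r =>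
    (Set.ncard_pos (Pset_finite 𝒮 α r)).2 (Pset_nonempty 𝒮 hα r)
  have hbdd : BddAbove {n | ∃ α ∈ 𝒮, n = ∏ t ∈ Finset.range τ, (Pset 𝒮 α t).ncard} :=
    ((Set.finite_range fun α : 𝒮 => ∏ t ∈ Finset.range τ, (Pset 𝒮 α.1 t).ncard).subset
      (by rintro n ⟨α, hα, rfl⟩; exact ⟨⟨α, hα⟩, rfl⟩)).bddAbove
  rw [← Real.logb_prod _ _ fun r _ => Nat.cast_ne_zero.2 (hpos r).ne', ← Nat.cast_prod]
  exact Real.logb_le_logb_of_le one_lt_two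
    (Nat.cast_pos.2 (Finset.prod_pos fun r _ => hpos r))
    (Nat.cast_le.2 (le_csSup hbdd ⟨α, hα, rfl⟩))

end Pset

variable {τ : ℕ} [NeZero τ] (𝒮 : Set (Fin τ → Set X)) [Nonempty 𝒮]

section Tracking

/-- A sequence of `𝒮` that agrees with `β` up to position `r` and passes through `A` at the
next position; at the last position the sequence restarts, and only `A` matters. -/
noncomputable def extend (β : Fin τ → Set X) (r : Fin τ) (A : Set X) : 𝒮 :=
  Classical.epsilon fun β' : 𝒮 => ((r : ℕ) + 1 < τ → ∀ i ≤ r, β'.1 i = β i) ∧ β'.1 (r + 1) = A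

theorem extend_spec {β : Fin τ → Set X} {r : Fin τ} {A : Set X} (hA : A ∈ Pset 𝒮 β r) :
    ((r : ℕ) + 1 < τ → ∀ i ≤ r, (extend 𝒮 β r A).1 i = β i) ∧ (extend 𝒮 β r A).1 (r + 1) = A := by
  have hex : ∃ β' : 𝒮, ((r : ℕ) + 1 < τ → ∀ i ≤ r, β'.1 i = β i) ∧ β'.1 (r + 1) = A := by
    unfold Pset at hA
    split_ifs at hA with hr
    · obtain ⟨β', hβ', hpre, rfl⟩ := hA
      exact ⟨⟨β', hβ'⟩, fun _ i hi => hpre i hi, congrArg β' (Fin.ext (Fin.val_add_one_of_lt' hr))⟩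
    · obtain ⟨β', hβ', h0, rfl⟩ := hA
      refine ⟨⟨β', hβ'⟩, fun h => absurd h hr, congrArg β' (Fin.ext ?_)⟩
      rw [Fin.val_add, Fin.val_one', Nat.add_mod_mod, show (r : ℕ) + 1 = τ by omega, Nat.mod_self]
  exact Classical.epsilon_spec hex

theorem extend_congr {β β' : Fin τ → Set X} {r : Fin τ}
    (h : (r : ℕ) + 1 < τ → ∀ i ≤ r, β i = β' i) (A : Set X) :
    extend 𝒮 β r A = extend 𝒮 β' r A := by
  unfold extend
  congr 1
  funext γ
  congr 1
  refine propext (imp_congr_right fun hr => forall_congr' fun i => imp_congr_right fun hi => ?_)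
  rw [h hr i hi]

noncomputable def next (β : 𝒮) (r : Fin τ) (x : X) : 𝒮 :=
  extend 𝒮 β.1 r (pick (Pset 𝒮 β.1 r) x)

theorem next_congr {β β' : 𝒮} {r : Fin τ} (h : (r : ℕ) + 1 < τ → ∀ i ≤ r, β.1 i = β'.1 i)
    (x : X) : next 𝒮 β r x = next 𝒮 β' r x := by
  rw [next, next, Pset_congr 𝒮 h, extend_congr 𝒮 h]

theorem mem_next (β : 𝒮) (r : Fin τ) {x : X} (hx : x ∈ ⋃ A ∈ Pset 𝒮 β.1 r, A) :
    x ∈ (next 𝒮 β r x).1 (r + 1) := by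
  rw [next, (extend_spec 𝒮 (pick_mem (Pset_nonempty 𝒮 β.2 r) x)).2]
  exact mem_pick hx

/-- Time `0` is treated as following position `τ - 1`, i.e. as the start of a period. -/
noncomputable def track (ξ : ℕ → X) : ℕ → 𝒮
  | 0 => next 𝒮 (Classical.arbitrary 𝒮) ((τ - 1 : ℕ) : Fin τ) (ξ 0)
  | t + 1 => next 𝒮 (track ξ t) t (ξ (t + 1))

theorem track_congr {ξ ξ' : ℕ → X} {t : ℕ} (h : ∀ i ≤ t, ξ i = ξ' i) :
    track 𝒮 ξ t = track 𝒮 ξ' t := by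
  induction t with
  | zero => simp only [track, h 0 le_rfl]
  | succ t ih => simp only [track, ih fun i hi => h i (by omega), h (t + 1) le_rfl]

theorem track_mul (ξ : ℕ → X) (q : ℕ) :
    track 𝒮 ξ (τ * q) = track 𝒮 (fun i => ξ (τ * q + i)) 0 := by
  have hτ := NeZero.pos τ
  rcases Nat.eq_zero_or_pos q with rfl | hq
  · rfl
  obtain ⟨s, hs⟩ : ∃ s, τ * q = s + 1 := ⟨τ * q - 1, by have := Nat.mul_pos hτ hq; omega⟩
  have hmod : s % τ = τ - 1 := by
    have h1 : (s + 1) % τ = 0 := by rw [← hs, Nat.mul_mod_right]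
    have h2 := Nat.mod_lt s hτ
    by_contra h
    have h3 : (s + 1) % τ = s % τ + 1 := by rw [← Nat.mod_add_mod, Nat.mod_eq_of_lt (by omega)]
    omega
  have hlast : (s : Fin τ) = ((τ - 1 : ℕ) : Fin τ) :=
    Fin.ext (by rw [Fin.val_natCast, Fin.val_natCast, hmod, Nat.mod_eq_of_lt (by omega)])
  rw [hs, track, track, hlast]
  refine next_congr 𝒮 (fun h => ?_) _
  rw [Fin.val_natCast, Nat.mod_eq_of_lt (by omega)] at h
  omega

theorem track_mul_add (ξ : ℕ → X) (q : ℕ) {r : ℕ} (hr : r < τ) :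
    track 𝒮 ξ (τ * q + r) = track 𝒮 (fun i => ξ (τ * q + i)) r := by
  induction r with
  | zero => exact track_mul 𝒮 ξ q
  | succ r ih =>
    rw [← add_assoc, track, track, ih (by omega)]
    congr 1
    exact Fin.ext (by rw [Fin.val_natCast, Fin.val_natCast, Nat.mul_add_mod])

theorem track_eq_track_shift (ξ : ℕ → X) (t : ℕ) :
    track 𝒮 ξ t = track 𝒮 (fun i => ξ (τ * (t / τ) + i)) (t % τ) := by
  conv_lhs => rw [← Nat.div_add_mod t τ]
  exact track_mul_add 𝒮 ξ _ (Nat.mod_lt t (NeZero.pos τ))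

theorem mem_track {F : X → U → Set X} {Q : Set X} {c : InvCover F Q}
    (hspan : IsSpanning F Q c τ 𝒮) {ξ : ℕ → X} {ν : ℕ → U} (htraj : IsTraj F ξ ν)
    (h0 : ξ 0 ∈ Q) (hν : ∀ t, ν t = c.G ((track 𝒮 ξ t).1 t)) (t : ℕ) :
    ξ t ∈ (track 𝒮 ξ t).1 t := by
  induction t with
  | zero =>
    have hlast : ¬ (((τ - 1 : ℕ) : Fin τ) : ℕ) + 1 < τ := by
      rw [Fin.val_natCast, Nat.mod_eq_of_lt (Nat.sub_lt (NeZero.pos τ) one_pos)]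
      omega
    have := mem_next 𝒮 (Classical.arbitrary 𝒮) _
      (hspan.subset_biUnion_Pset_of_not_lt _ hlast h0)
    rwa [← Nat.cast_add_one, Nat.sub_add_cancel NeZero.one_le, Fin.natCast_self,
      ← Nat.cast_zero] at this
  | succ t ih =>
    have hstep := htraj t
    rw [hν t] at hstep
    have := mem_next 𝒮 _ _ (hspan.image_subset_biUnion_Pset (track 𝒮 ξ t).2 _ ih hstep)
    rwa [← Nat.cast_add_one] at this

end Tracking

/-- The symbol sent at time `t` is the tracked sequence `track 𝒮 ξ t`, restarted at every
multiple of `τ`; the controller applies `G` to its element at position `t`. -/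
noncomputable def coderController (e : 𝒮 ≃ S) (G : Set X → U) : CoderController X U S where
  γ t ξ := e (track 𝒮 (fun i => ξ ⟨min i t, Nat.lt_succ_of_le (min_le_right i t)⟩) t)
  δ t ζ := G ((e.symm (ζ (Fin.last t))).1 t)

variable (e : 𝒮 ≃ S) (G : Set X → U)

section Control

theorem coderController_γ (ξ : ℕ → X) (t : ℕ) :
    (coderController 𝒮 e G).γ t (fun i : Fin (t + 1) => ξ i) = e (track 𝒮 ξ t) :=
  congrArg e (track_congr 𝒮 fun i hi => by simp only [min_eq_left hi])

theorem coderController_δ_Gam (ξ : ℕ → X) (t : ℕ) :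
    (coderController 𝒮 e G).δ t (Gam (coderController 𝒮 e G) t fun i => ξ i) =
      G ((track 𝒮 ξ t).1 t) := by
  change G ((e.symm ((coderController 𝒮 e G).γ t fun i => ξ i)).1 t) = _
  rw [coderController_γ, Equiv.symm_apply_apply]

theorem isPeriodic_coderController : IsPeriodic (coderController 𝒮 e G) τ := by
  refine ⟨fun t ξ => congrArg e ?_, fun t ζ => congrArg G ?_⟩
  · rw [track_eq_track_shift]
    refine track_congr 𝒮 fun i hi => congrArg ξ (Fin.ext ?_)
    have := Nat.div_add_mod t τ
    dsimp only
    omega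
  · have hpos : ((t % τ : ℕ) : Fin τ) = t := Fin.ext (by simp only [Fin.val_natCast, Nat.mod_mod])
    change _ = (e.symm (ζ ⟨τ * (t / τ) + t % τ, _⟩)).1 _
    rw [hpos, Fin.ext (Nat.div_add_mod t τ) (a := ⟨_, _⟩) (b := Fin.last t)]

theorem qAdmissible_coderController {F : X → U → Set X} {Q : Set X} {c : InvCover F Q}
    (hspan : IsSpanning F Q c τ 𝒮) : QAdmissible F Q (coderController 𝒮 e c.G) := by
  intro ξ ν htraj h0 hν t
  have hν' : ∀ t, ν t = c.G ((track 𝒮 ξ t).1 t) := fun t => by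
    rw [hν, coderController_δ_Gam]
  exact c.subset _ (hspan.1 _ (track 𝒮 ξ t).2 t) (mem_track 𝒮 hspan htraj h0 hν' t)

end Control

variable (F : X → U → Set X)

section ClosedLoopSymbols

theorem Zset_subset_image {k : ℕ} (ζ : Fin (k + 1) → S) :
    Zset F (coderController 𝒮 e G) ζ ⊆
      (fun A => e (extend 𝒮 (e.symm (ζ (Fin.last k))).1 k A)) ''
        Pset 𝒮 (e.symm (ζ (Fin.last k))).1 (k : Fin τ) := by
  rw [Zset, if_neg k.succ_ne_zero]
  rintro s ⟨ξ, ν, -, hζ, rfl, -⟩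
  have hk : e.symm (ζ (Fin.last k)) = track 𝒮 ξ k := by
    rw [← hζ (Fin.last k), Equiv.symm_apply_eq]
    exact coderController_γ 𝒮 e G ξ k
  rw [coderController_γ, track, hk]
  exact ⟨_, pick_mem (Pset_nonempty 𝒮 (track 𝒮 ξ k).2 _) _, rfl⟩

theorem ncard_Zset_le [Finite 𝒮] {k : ℕ} (ζ : Fin (k + 1) → S) :
    (Zset F (coderController 𝒮 e G) ζ).ncard ≤
      (Pset 𝒮 (e.symm (ζ (Fin.last k))).1 (k : Fin τ)).ncard :=
  (Set.ncard_le_ncard (Zset_subset_image 𝒮 e G F ζ) ((Pset_finite 𝒮 _ _).image _)).trans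
    (Set.ncard_image_le (Pset_finite 𝒮 _ _))

variable {𝒮 e G F} {τ' : ℕ} {ζ : Fin τ' → S}

theorem agree_of_mem_ZTau (hζ : ζ ∈ ZTau F (coderController 𝒮 e G) τ') {k : ℕ}
    (hk : k + 1 < τ') (hr : ((k : Fin τ) : ℕ) + 1 < τ) :
    ∀ i ≤ (k : Fin τ), (e.symm (ζ ⟨k + 1, hk⟩)).1 i = (e.symm (ζ ⟨k, by omega⟩)).1 i := by
  obtain ⟨A, hA, hs⟩ := Zset_subset_image 𝒮 e G F (k := k) _ (hζ.2 ⟨k + 1, hk⟩ k.succ_pos)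
  rw [← hs, Equiv.symm_apply_apply]
  exact (extend_spec 𝒮 hA).1 hr

theorem agree_of_mem_ZTau_of_le (hζ : ζ ∈ ZTau F (coderController 𝒮 e G) τ') (q : ℕ)
    {r s : ℕ} (hrs : r ≤ s) (hs : s < τ) (hsτ' : τ * q + s < τ') :
    ∀ i : Fin τ, (i : ℕ) ≤ r →
      (e.symm (ζ ⟨τ * q + r, by omega⟩)).1 i = (e.symm (ζ ⟨τ * q + s, hsτ'⟩)).1 i := by
  induction s, hrs using Nat.le_induction with
  | base => exact fun _ _ => rfl
  | succ s hrs ih =>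
    intro i hi
    have hpos : (((τ * q + s : ℕ) : Fin τ) : ℕ) = s := by
      rw [Fin.val_natCast, Nat.mul_add_mod, Nat.mod_eq_of_lt (by omega)]
    rw [ih (by omega) (by omega) i hi]
    exact (agree_of_mem_ZTau hζ (k := τ * q + s) (by omega) (by omega) i
      (Fin.le_def.2 (by omega))).symm

end ClosedLoopSymbols

section Rate

/-- `ncard_Zset_le`'s bound on the `(k+1)`-st summand of the transmission rate along `ζ`,
extended by `0` past the horizon. -/
noncomputable def expansionTerm {τ' : ℕ} (ζ : Fin τ' → S) (k : ℕ) : ℝ :=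
  if h : k + 1 < τ' then Real.logb 2 (Pset 𝒮 (e.symm (ζ ⟨k, by omega⟩)).1 (k : Fin τ)).ncard
  else 0

variable [Finite 𝒮]

theorem sum_expansionTerm_block_le {τ' : ℕ} {ζ : Fin τ' → S}
    (hζ : ζ ∈ ZTau F (coderController 𝒮 e G) τ') (q : ℕ) :
    ∑ r ∈ Finset.range τ, expansionTerm 𝒮 e ζ (τ * q + r) ≤ Real.logb 2 (expNum 𝒮) := by
  by_cases hq : τ * q + 1 < τ'
  · have hτ := NeZero.pos τ
    obtain ⟨s, hs, hsτ', hmax⟩ :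
        ∃ s < τ, τ * q + s + 1 < τ' ∧ ∀ r < τ, τ * q + r + 1 < τ' → r ≤ s :=
      ⟨min (τ - 1) (τ' - 2 - τ * q), by omega, by omega, fun r hr hrτ' => by omega⟩
    refine (Finset.sum_le_sum fun r hr => ?_).trans
      (sum_logb_ncard_Pset_le 𝒮 (e.symm (ζ ⟨τ * q + s, by omega⟩)).2)
    rw [Finset.mem_range] at hr
    unfold expansionTerm
    split_ifs with h
    · have hpos : (((τ * q + r : ℕ) : Fin τ) : ℕ) = r := by
        rw [Fin.val_natCast, Nat.mul_add_mod, Nat.mod_eq_of_lt hr]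
      rw [hpos, Pset_congr 𝒮 fun _ =>
        agree_of_mem_ZTau_of_le hζ q (hmax r hr h) hs (by omega)]
    · exact Real.logb_two_natCast_nonneg _
  · refine (Finset.sum_eq_zero fun r _ => ?_).trans_le (Real.logb_two_natCast_nonneg _)
    rw [expansionTerm, dif_neg (by omega)]

theorem sum_logb_ncard_Zset_le {n : ℕ} {ζ : Fin (n + 1) → S}
    (hζ : ζ ∈ ZTau F (coderController 𝒮 e G) (n + 1)) :
    ∑ k : Fin (n + 1),
        Real.logb 2 (Zset F (coderController 𝒮 e G) fun i : Fin k => ζ ⟨i, by omega⟩).ncard ≤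
      Real.logb 2 (Nat.card S) + (n / τ + 1 : ℕ) * Real.logb 2 (expNum 𝒮) := by
  have hlen : n ≤ τ * (n / τ + 1) := by
    have := Nat.div_add_mod n τ
    have := Nat.mod_lt n (NeZero.pos τ)
    rw [Nat.mul_succ]
    omega
  rw [Fin.sum_univ_succ]
  refine add_le_add (by simp [Zset]) ?_
  calc _ ≤ ∑ k : Fin n, expansionTerm 𝒮 e ζ k := Finset.sum_le_sum fun k _ => by
        rw [expansionTerm, dif_pos (by omega)]
        exact Real.logb_two_natCast_le (ncard_Zset_le 𝒮 e G F (k := k) _)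
    _ = ∑ k ∈ Finset.range n, expansionTerm 𝒮 e ζ k := Fin.sum_univ_eq_sum_range _ n
    _ ≤ ∑ k ∈ Finset.range (τ * (n / τ + 1)), expansionTerm 𝒮 e ζ k := by
        refine Finset.sum_le_sum_of_subset_of_nonneg (Finset.range_subset_range.2 hlen)
          fun k _ _ => ?_
        unfold expansionTerm
        split_ifs
        exacts [Real.logb_two_natCast_nonneg _, le_rfl]
    _ ≤ ∑ q ∈ Finset.range (n / τ + 1), Real.logb 2 (expNum 𝒮) := by
        rw [Finset.sum_range_mul_eq_sum_sum]
        exact Finset.sum_le_sum fun q _ => sum_expansionTerm_block_le 𝒮 e G F hζ q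
    _ = (n / τ + 1 : ℕ) * Real.logb 2 (expNum 𝒮) := by simp

theorem rateAt_coderController_le (n : ℕ) :
    rateAt F (coderController 𝒮 e G) (n + 1) ≤ (τ : ℝ)⁻¹ * Real.logb 2 (expNum 𝒮) +
      (Real.logb 2 (Nat.card S) + Real.logb 2 (expNum 𝒮)) / (n + 1) := by
  set L := Real.logb 2 (expNum 𝒮)
  have hL : 0 ≤ L := Real.logb_two_natCast_nonneg _
  have hS := Real.logb_two_natCast_nonneg (Nat.card S)
  have hτ : (0 : ℝ) < τ := by exact_mod_cast NeZero.pos τ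
  have hdiv : ((n / τ : ℕ) : ℝ) ≤ (n + 1) / τ :=
    Nat.cast_div_le.trans (div_le_div_of_nonneg_right (by linarith) hτ.le)
  refine Real.sSup_le ?_ (by positivity)
  rintro _ ⟨ζ, hζ, rfl⟩
  calc _ ≤ ((n + 1 : ℕ) : ℝ)⁻¹ * (Real.logb 2 (Nat.card S) + (n / τ + 1 : ℕ) * L) := by
        gcongr
        exact sum_logb_ncard_Zset_le 𝒮 e G F hζ
    _ = (Real.logb 2 (Nat.card S) + L) / (n + 1) + (n / τ : ℕ) * L / (n + 1) := by
        push_cast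
        ring
    _ ≤ (Real.logb 2 (Nat.card S) + L) / (n + 1) + (n + 1) / τ * L / (n + 1) := by gcongr
    _ = (τ : ℝ)⁻¹ * L + (Real.logb 2 (Nat.card S) + L) / (n + 1) := by
        field_simp
        ring

theorem dataRate_coderController_le :
    dataRate F (coderController 𝒮 e G) ≤ (τ : ℝ)⁻¹ * Real.logb 2 (expNum 𝒮) :=
  limsup_le_of_le_add_div (rateAt_nonneg _) (rateAt_coderController_le 𝒮 e G F)

end Rate

end SpanningCoder

theorem exists_coderController_of_spanning_general
    {X U : Type*} (F : X → U → Set X) (Q : Set X) (hQ : Q.Nonempty)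
    (c : InvCover F Q) (τ : ℕ) (hτ : 0 < τ)
    (𝒮 : Set (Fin τ → Set X)) (hspan : IsSpanning F Q c τ 𝒮) :
    ∃ (S : Type) (_ : Fintype S) (_ : Nonempty S) (H : CoderController X U S),
      QAdmissible F Q H ∧ IsPeriodic H τ ∧
      dataRate F H ≤ (τ : ℝ)⁻¹ * Real.logb 2 (expNum 𝒮) := by
  have : NeZero τ := ⟨hτ.ne'⟩
  obtain ⟨x, hx⟩ := hQ
  obtain ⟨α, hα, -⟩ := hspan.2.1 x hx
  have : Nonempty 𝒮 := ⟨⟨α, hα⟩⟩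
  have : Finite 𝒮 := hspan.finite
  let e := Finite.equivFin 𝒮
  exact ⟨_, inferInstance, e.symm.nonempty, SpanningCoder.coderController 𝒮 e c.G,
    SpanningCoder.qAdmissible_coderController 𝒮 e hspan,
    SpanningCoder.isPeriodic_coderController 𝒮 e c.G,
    SpanningCoder.dataRate_coderController_le 𝒮 e c.G F⟩

/-- For every invariant cover `(𝒜,G)` of `Σ` and `Q` and every
`(τ,Q)`-spanning set `𝒮` in `(𝒜,G)` there exists a `Q`-admissible `τ`-periodic
coder-controller `H` with `R(H) ≤ (1/τ) log₂ N(𝒮)`. -/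
theorem exists_coderController_of_spanning
    {X U : Type*} [Nonempty X] [Nonempty U]
    (F : X → U → Set X) (hF : ∀ x u, (F x u).Nonempty)
    (Q : Set X) (hQ : Q.Nonempty)
    (c : InvCover F Q) (τ : ℕ) (hτ : 0 < τ)
    (𝒮 : Set (Fin τ → Set X)) (hspan : IsSpanning F Q c τ 𝒮) :
    ∃ (S : Type) (_ : Fintype S) (_ : Nonempty S) (H : CoderController X U S),
      QAdmissible F Q H ∧ IsPeriodic H τ ∧
      dataRate F H ≤ (τ : ℝ)⁻¹ * Real.logb 2 (expNum 𝒮) :=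
  exists_coderController_of_spanning_general F Q hQ c τ hτ 𝒮 hspan
end

section
/- Let a∈ℝ with a≠0 and w₁,q₁,w₂,q₂∈ℝ with q₁ < w₁ ≤ w₂ < q₂. Let Σ=(X,U,F) with X=U=ℝ and F(x,u) = a·x + u + [w₁,w₂], and let Q := [q₁,q₂]. Put Δq := q₂−q₁, Δw := w₂−w₁, q_c := (q₁+q₂)/2 (the midpoint of Q), w_c := (w₁+w₂)/2 (the midpoint of [w₁,w₂]), m := ⌈ |a|·Δq/(Δq−Δw) ⌉ and d := Δq/m. For i∈ℤ define Λ_i := q_c + [i·d, (i+1)·d] if m is even and Λ_i := q_c + [(i−1/2)·d, (i+1/2)·d] if m is odd; define 𝒞 := { Λ_i ∩ Q : Λ_i ∩ int Q ≠ ∅ } and, for each cover element C_i = Λ_i ∩ Q ∈ 𝒞, H(C_i) := q_c − a·q_c − w_c − a·d·(i+1/2) if m is even and H(C_i) := q_c − a·q_c − w_c − a·d·i if m is odd. Then (𝒞,H) is an invariant cover of Σ and [q₁,q₂], and log₂ ⌈ |a|·Δq/(Δq−Δw) ⌉ = R(𝒞,H), i.e. #𝒞 = m. -/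
open Set Filter Topology

variable {X U : Type*}

/-!
On a cell of width `d`, the uncontrolled part `a x` of the dynamics spreads over an interval of
length `|a| d`, and the disturbance adds `Δw`. Choosing the input so that the image of the cell's
centre is `q_c - w_c` centres the successor set at `q_c`, so it stays in `Q` as soon as
`|a| d ≤ Δq - Δw`, which is exactly what `m = ⌈|a| Δq / (Δq - Δw)⌉` guarantees for `d = Δq / m`.
The cells `Λ_i` form a grid of width `d` whose offset (depending on the parity of `m`) makes `Q` the
union of exactly `m` consecutive cells.
-/

theorem mul_div_natCeil_le {x b y : ℝ} (hy : 0 ≤ y) : x * (b / ⌈x * b / y⌉₊) ≤ y := by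
  rcases Nat.eq_zero_or_pos ⌈x * b / y⌉₊ with hm | hm
  · simp [hm, hy]
  · have hy' : 0 < y := hy.lt_of_ne (by rintro rfl; simp at hm)
    have : x * b ≤ ⌈x * b / y⌉₊ * y := (div_le_iff₀ hy').mp (Nat.le_ceil _)
    rw [mul_div_assoc', div_le_iff₀ (by positivity)]
    linarith

theorem natCast_div_two_add_ite {K : Type*} [Field K] [CharZero K] (m : ℕ) :
    ((m / 2 : ℕ) : K) + (if Even m then 0 else 1 / 2) = m / 2 := by
  obtain ⟨j, rfl | rfl⟩ := Nat.even_or_odd' m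
  · simp
  · rw [if_neg (by simp [parity_simps]), show (2 * j + 1) / 2 = j by omega]
    push_cast
    ring

def scalarSys (a w₁ w₂ : ℝ) : ℝ → ℝ → Set ℝ :=
  fun x u => {y | ∃ w ∈ Icc w₁ w₂, y = a * x + u + w}

def gridIcc (o d : ℝ) (i : ℤ) : Set ℝ := Icc (o + i * d) (o + (i + 1) * d)

section Grid

variable {o d x : ℝ} {i k l : ℤ}

theorem mem_gridIcc_iff (hd : 0 < d) :
    x ∈ gridIcc o d i ↔ (i : ℝ) ≤ (x - o) / d ∧ (x - o) / d ≤ i + 1 := by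
  rw [gridIcc, mem_Icc, le_div_iff₀ hd, div_le_iff₀ hd]
  constructor <;> rintro ⟨h₁, h₂⟩ <;> constructor <;> linarith

theorem gridIcc_injective (hd : 0 < d) : Function.Injective (gridIcc o d) := by
  intro i j hij
  have hi : o + i * d ∈ gridIcc o d j := hij ▸ ⟨le_rfl, by linarith⟩
  have hj : o + j * d ∈ gridIcc o d i := hij ▸ ⟨le_rfl, by linarith⟩
  have : (i : ℝ) = j := by
    nlinarith [hi.1, hj.1]
  exact_mod_cast this

theorem abs_sub_center_le_of_mem_gridIcc (hx : x ∈ gridIcc o d i) :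
    |x - (o + (i + 1 / 2) * d)| ≤ d / 2 := by
  obtain ⟨h₁, h₂⟩ := hx
  rw [abs_le]
  constructor <;> linarith

theorem gridIcc_subset_Icc (hd : 0 ≤ d) (hi : i ∈ Ico k l) :
    gridIcc o d i ⊆ Icc (o + k * d) (o + l * d) := by
  have hk : (k : ℝ) ≤ i := by exact_mod_cast hi.1
  have hl : (i : ℝ) + 1 ≤ l := by exact_mod_cast hi.2
  exact Icc_subset_Icc (by nlinarith) (by nlinarith)

theorem gridIcc_inter_Ioo_nonempty_iff (hd : 0 < d) :
    (gridIcc o d i ∩ Ioo (o + k * d) (o + l * d)).Nonempty ↔ i ∈ Ico k l := by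
  constructor
  · rintro ⟨x, ⟨hxi, hxi'⟩, hk, hl⟩
    have hk' : (k : ℝ) < i + 1 := lt_of_mul_lt_mul_right (by linarith) hd.le
    have hl' : (i : ℝ) < l := lt_of_mul_lt_mul_right (by linarith) hd.le
    exact ⟨Int.lt_add_one_iff.mp (by exact_mod_cast hk'), by exact_mod_cast hl'⟩
  · intro hi
    have hk : (k : ℝ) ≤ i := by exact_mod_cast hi.1
    have hl : (i : ℝ) + 1 ≤ l := by exact_mod_cast hi.2
    exact ⟨o + (i + 1 / 2) * d, ⟨by linarith, by linarith⟩, by nlinarith, by nlinarith⟩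

theorem Icc_subset_biUnion_gridIcc (hd : 0 < d) (hkl : k < l) :
    Icc (o + k * d) (o + l * d) ⊆ ⋃ i ∈ Ico k l, gridIcc o d i := by
  intro x ⟨hk, hl⟩
  set t := (x - o) / d
  have hkt : (k : ℝ) ≤ t := by rw [le_div_iff₀ hd]; linarith
  have htl : t ≤ l := by rw [div_le_iff₀ hd]; linarith
  -- the floor of `t` would overshoot at the right endpoint `t = l`
  refine mem_biUnion (x := min ⌊t⌋ (l - 1)) ⟨le_min (Int.le_floor.mpr hkt) (by omega), by omega⟩ ?_
  rw [mem_gridIcc_iff hd]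
  constructor
  · exact (Int.cast_le.mpr (min_le_left _ _)).trans (Int.floor_le t)
  · rcases le_total ⌊t⌋ (l - 1) with h | h
    · rw [min_eq_left h]; exact (Int.lt_floor_add_one t).le
    · rw [min_eq_right h]; push_cast; linarith

theorem setOf_gridIcc_inter_eq_image (hd : 0 < d) :
    {C | ∃ i, (gridIcc o d i ∩ interior (Icc (o + k * d) (o + l * d))).Nonempty ∧
      C = gridIcc o d i ∩ Icc (o + k * d) (o + l * d)} = gridIcc o d '' Ico k l := by
  ext C
  simp only [interior_Icc, gridIcc_inter_Ioo_nonempty_iff hd, mem_image]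
  constructor
  · rintro ⟨i, hi, rfl⟩
    exact ⟨i, hi, (inter_eq_left.mpr (gridIcc_subset_Icc hd.le hi)).symm⟩
  · rintro ⟨i, hi, rfl⟩
    exact ⟨i, hi, (inter_eq_left.mpr (gridIcc_subset_Icc hd.le hi)).symm⟩

end Grid

theorem mul_add_mem_Icc_of_abs_sub_le {a c r x w w₁ w₂ q₁ q₂ : ℝ} (hx : |x - c| ≤ r)
    (hw : w ∈ Icc w₁ w₂) (har : |a| * (2 * r) ≤ (q₂ - q₁) - (w₂ - w₁)) :
    a * x + ((q₁ + q₂) / 2 - a * c - (w₁ + w₂) / 2) + w ∈ Icc q₁ q₂ := by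
  have h : |a * (x - c)| ≤ |a| * r := by
    rw [abs_mul]; exact mul_le_mul_of_nonneg_left hx (abs_nonneg a)
  obtain ⟨h₁, h₂⟩ := abs_le.mp h
  obtain ⟨hw₁, hw₂⟩ := hw
  constructor <;> nlinarith

theorem exists_invCover_gridIcc {a w₁ w₂ q₁ q₂ o d : ℝ} {k l : ℤ} (hd : 0 < d) (hkl : k < l)
    (hq₁ : o + k * d = q₁) (hq₂ : o + l * d = q₂) (had : |a| * d ≤ (q₂ - q₁) - (w₂ - w₁)) :
    ∃ c : InvCover (scalarSys a w₁ w₂) (Icc q₁ q₂),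
      c.cov = {C | ∃ i, (gridIcc o d i ∩ interior (Icc q₁ q₂)).Nonempty ∧
        C = gridIcc o d i ∩ Icc q₁ q₂} ∧
      (∀ i, (gridIcc o d i ∩ interior (Icc q₁ q₂)).Nonempty →
        c.G (gridIcc o d i ∩ Icc q₁ q₂) =
          (q₁ + q₂) / 2 - a * (o + (i + 1 / 2) * d) - (w₁ + w₂) / 2) ∧
      c.cov.ncard = (l - k).toNat := by
  subst hq₁ hq₂
  set v : ℤ → ℝ := fun i =>
    (o + k * d + (o + l * d)) / 2 - a * (o + (i + 1 / 2) * d) - (w₁ + w₂) / 2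
  have hG := (gridIcc_injective (o := o) hd).extend_apply v 0
  refine ⟨⟨gridIcc o d '' Ico k l, Function.extend (gridIcc o d) v 0, (finite_Ico k l).image _,
    ?_, ?_, ?_⟩, (setOf_gridIcc_inter_eq_image hd).symm, fun i hi => ?_, ?_⟩
  · rintro _ ⟨i, hi, rfl⟩
    exact gridIcc_subset_Icc hd.le hi
  · rw [sUnion_image]
    exact Icc_subset_biUnion_gridIcc hd hkl
  · rintro _ ⟨i, -, rfl⟩ x hx y ⟨w, hw, rfl⟩
    rw [hG]
    exact mul_add_mem_Icc_of_abs_sub_le (a := a) (q₁ := o + k * d) (q₂ := o + l * d)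
      (abs_sub_center_le_of_mem_gridIcc hx) hw (by linarith)
  · rw [interior_Icc, gridIcc_inter_Ioo_nonempty_iff hd] at hi
    rw [inter_eq_left.mpr (gridIcc_subset_Icc hd.le hi)]
    exact hG i
  · rw [ncard_image_of_injective _ (gridIcc_injective hd), ← Finset.coe_Ico, ncard_coe_finset,
      Int.card_Ico]

/-- For the scalar uncertain linear system
`ξ(t+1) ∈ a ξ(t) + ν(t) + [w₁,w₂]` and `Q = [q₁,q₂]` with `q₁ < w₁ ≤ w₂ < q₂`, the
explicit construction `(𝒞,H)` (cover elements `Λ_i ∩ Q` and inputs `H(C_i)`) is an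
invariant cover of the system and `Q` with `#𝒞 = m = ⌈|a| Δq / (Δq − Δw)⌉`, i.e.
`log₂ ⌈|a| Δq / (Δq − Δw)⌉ = R(𝒞,H)`. -/
theorem scalar_static_coderController
    (a w₁ w₂ q₁ q₂ : ℝ) (ha : a ≠ 0) (h1 : q₁ < w₁) (h2 : w₁ ≤ w₂) (h3 : w₂ < q₂) :
    let Q : Set ℝ := Set.Icc q₁ q₂
    let F : ℝ → ℝ → Set ℝ := fun x u => {y | ∃ w ∈ Set.Icc w₁ w₂, y = a * x + u + w}
    let Δq : ℝ := q₂ - q₁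
    let Δw : ℝ := w₂ - w₁
    let qc : ℝ := (q₁ + q₂) / 2
    let wc : ℝ := (w₁ + w₂) / 2
    let m : ℕ := ⌈|a| * Δq / (Δq - Δw)⌉₊
    let d : ℝ := Δq / m
    let Λ : ℤ → Set ℝ := fun i =>
      if Even m then Set.Icc (qc + i * d) (qc + (i + 1) * d)
      else Set.Icc (qc + (i - 1 / 2) * d) (qc + (i + 1 / 2) * d)
    let u : ℤ → ℝ := fun i =>
      qc - a * qc - wc - (if Even m then a * d * (i + 1 / 2) else a * d * i)
    ∃ c : InvCover F Q,
      c.cov = {C | ∃ i : ℤ, (Λ i ∩ interior Q).Nonempty ∧ C = Λ i ∩ Q} ∧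
      (∀ i : ℤ, (Λ i ∩ interior Q).Nonempty → c.G (Λ i ∩ Q) = u i) ∧
      c.cov.ncard = m := by
  intro Q F Δq Δw qc wc m d Λ u
  have hΔ : 0 < Δq - Δw := by simp only [Δq, Δw]; linarith
  have hm : 0 < m := Nat.ceil_pos.mpr (div_pos (mul_pos (abs_pos.mpr ha) (by linarith)) hΔ)
  have hd : 0 < d := div_pos (by linarith) (by exact_mod_cast hm)
  have hmd : m * d = Δq := mul_div_cancel₀ _ (by positivity)
  -- `Λ` is the grid of width `d` through `o`, and `Q` is the union of its cells `k, …, k + m - 1`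
  set o : ℝ := qc - (if Even m then 0 else 1 / 2) * d
  set k : ℤ := -((m / 2 : ℕ) : ℤ)
  have hpar := natCast_div_two_add_ite (K := ℝ) m
  have hq₁ : o + k * d = q₁ := by
    simp only [o, k, qc, Δq, Int.cast_neg, Int.cast_natCast] at hmd ⊢
    linear_combination (-d) * hpar - 1 / 2 * hmd
  have hq₂ : o + (k + m : ℤ) * d = q₂ := by
    simp only [o, k, qc, Δq, Int.cast_add, Int.cast_neg, Int.cast_natCast] at hmd ⊢
    linear_combination (-d) * hpar + 1 / 2 * hmd
  have hΛ : Λ = gridIcc o d := by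
    funext i
    simp only [Λ, gridIcc, o]
    split_ifs <;> ring_nf
  have hu : ∀ i : ℤ, u i = (q₁ + q₂) / 2 - a * (o + (i + 1 / 2) * d) - (w₁ + w₂) / 2 := by
    intro i
    simp only [u, o, qc, wc]
    split_ifs <;> ring
  obtain ⟨c, hcov, hG, hcard⟩ := exists_invCover_gridIcc (a := a) (w₁ := w₁) (w₂ := w₂) hd
    (by omega : k < k + m) hq₁ hq₂ (mul_div_natCeil_le hΔ.le)
  rw [hΛ]
  exact ⟨c, hcov, fun i hi => (hG i hi).trans (hu i).symm, by rw [hcard]; omega⟩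
end
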